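/- arXiv:2602.12519 — 15 statements merged into one kernel-verified Lean document; each statement's English description precedes it below -/
import Mathlib

section
/- Let (A,·,∘) be a transposed Novikov-Poisson algebra. Then the bracket [x,y] := x∘y − y∘x makes (A,·,[·,·]) a transposed Poisson algebra; in particular 2z·[x,y] = [z·x,y] + [x,z·y] for all x,y,z ∈ A. -/
section Commutator

variable {k A : Type*} [CommRing k] [AddCommGroup A] [Module k A]

theorem LinearMap.sub_flip_apply_swap (c : A →ₗ[k] A →ₗ[k] A) (x y : A) :
    (c - c.flip) x y = -(c - c.flip) y x := by
  simp only [LinearMap.sub_apply, LinearMap.flip_apply, neg_sub]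

theorem LinearMap.sub_flip_jacobi_of_leftSymm (c : A →ₗ[k] A →ₗ[k] A)
    (hc : ∀ x y z : A, c (c x y) z - c x (c y z) = c (c y x) z - c y (c x z)) (x y z : A) :
    (c - c.flip) ((c - c.flip) x y) z + (c - c.flip) ((c - c.flip) y z) x
      + (c - c.flip) ((c - c.flip) z x) y = 0 := by
  have hxyz := hc x y z
  have hyzx := hc y z x
  have hzxy := hc z x y
  simp only [LinearMap.sub_apply, LinearMap.flip_apply, map_sub] at *
  linear_combination (norm := abel) hxyz + hyzx + hzxy

theorem LinearMap.two_smul_mul_sub_flip (mul c : A →ₗ[k] A →ₗ[k] A)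
    (h : ∀ x y z : A, (2 : k) • mul z (c x y) = c (mul z x) y + c x (mul z y)) (x y z : A) :
    (2 : k) • mul z ((c - c.flip) x y)
      = (c - c.flip) (mul z x) y + (c - c.flip) x (mul z y) := by
  simp only [LinearMap.sub_apply, LinearMap.flip_apply, map_sub, smul_sub, h]
  abel

end Commutator

theorem stmt0_general {k A : Type*} [Field k] [AddCommGroup A] [Module k A]
    (mul cir : A →ₗ[k] A →ₗ[k] A)
    (hnov2 : ∀ x y z : A, cir (cir x y) z - cir x (cir y z) = cir (cir y x) z - cir y (cir x z))
    (htnp2 : ∀ x y z : A, (2:k) • mul z (cir x y) = cir (mul z x) y + cir x (mul z y))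
    (br : A → A → A)
    (hbr : ∀ x y : A, br x y = cir x y - cir y x) :
    (∀ x y : A, br x y = - br y x) ∧
    (∀ x y z : A, br (br x y) z + br (br y z) x + br (br z x) y = 0) ∧
    (∀ x y z : A, (2:k) • mul z (br x y) = br (mul z x) y + br x (mul z y)) := by
  obtain rfl : br = fun x y => (cir - cir.flip) x y := funext₂ hbr
  exact ⟨cir.sub_flip_apply_swap, cir.sub_flip_jacobi_of_leftSymm hnov2,
    LinearMap.two_smul_mul_sub_flip mul cir htnp2⟩

/-- In a transposed Novikov-Poisson algebra, the commutator bracket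
[x,y] = x∘y − y∘x makes (A,·,[·,·]) a transposed Poisson algebra. -/
theorem stmt0 {k A : Type*} [Field k] [AddCommGroup A] [Module k A]
    (hchar : (2:k) ≠ 0)
    (mul cir : A →ₗ[k] A →ₗ[k] A)
    (hcomm : ∀ x y : A, mul x y = mul y x)
    (hassoc : ∀ x y z : A, mul (mul x y) z = mul x (mul y z))
    (hnov1 : ∀ x y z : A, cir (cir x y) z = cir (cir x z) y)
    (hnov2 : ∀ x y z : A, cir (cir x y) z - cir x (cir y z) = cir (cir y x) z - cir y (cir x z))
    (htnp1 : ∀ x y z : A, cir (mul x y) z = cir (mul x z) y)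
    (htnp2 : ∀ x y z : A, (2:k) • mul z (cir x y) = cir (mul z x) y + cir x (mul z y))
    (br : A → A → A)
    (hbr : ∀ x y : A, br x y = cir x y - cir y x) :
    (∀ x y : A, br x y = - br y x) ∧
    (∀ x y z : A, br (br x y) z + br (br y z) x + br (br z x) y = 0) ∧
    (∀ x y z : A, (2:k) • mul z (br x y) = br (mul z x) y + br x (mul z y)) :=
  stmt0_general mul cir hnov2 htnp2 br hbr
end

section
/- Let (A,·,∘) be a transposed Novikov-Poisson algebra and D : A → A a linear map that is a derivation of both (A,·) and (A,∘). Then [x,y] := D(x)∘y − D(y)∘x defines a Lie bracket on A making (A,·,[·,·]) a transposed Poisson algebra. -/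
/-!
The bracket `[x, y] = D x ∘ y - D y ∘ x` is antisymmetric by construction. In the Jacobi sum,
expanding `D` by the Leibniz rule, the terms containing `D (D _)` cancel in pairs by
right-commutativity of `∘`, and the remaining ones cancel by left-symmetry. The transposed
Leibniz rule is the compatibility `2 z·(a ∘ b) = (z·a) ∘ b + a ∘ (z·b)` applied to `a = D x` and
to `a = D y`; the leftover terms `(D z·x) ∘ y - (D z·y) ∘ x` vanish by `(u·v) ∘ w = (u·w) ∘ v`.
-/

namespace DerivedBracket

variable {R A : Type*} [CommSemiring R] [AddCommGroup A] [Module R A]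

def bracket (cir : A →ₗ[R] A →ₗ[R] A) (D : A →ₗ[R] A) (x y : A) : A :=
  cir (D x) y - cir (D y) x

variable {cir : A →ₗ[R] A →ₗ[R] A} {D : A →ₗ[R] A}

theorem bracket_antisymm (x y : A) : bracket cir D x y = -bracket cir D y x := by
  simp only [bracket, neg_sub]

theorem bracket_jacobi
    (hrc : ∀ x y z : A, cir (cir x y) z = cir (cir x z) y)
    (hls : ∀ x y z : A, cir (cir x y) z - cir x (cir y z) = cir (cir y x) z - cir y (cir x z))
    (hD : ∀ x y : A, D (cir x y) = cir (D x) y + cir x (D y)) (x y z : A) :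
    bracket cir D (bracket cir D x y) z + bracket cir D (bracket cir D y z) x
      + bracket cir D (bracket cir D z x) y = 0 := by
  simp only [bracket, hD, map_sub, map_add, LinearMap.sub_apply, LinearMap.add_apply]
  rw [hrc (D (D x)) z y, hrc (D (D y)) x z, hrc (D (D z)) y x,
    eq_add_of_sub_eq (hls (D x) (D y) z), eq_add_of_sub_eq (hls (D y) (D z) x),
    eq_add_of_sub_eq (hls (D z) (D x) y)]
  abel

theorem two_smul_mul_bracket (mul : A →ₗ[R] A →ₗ[R] A)
    (hmc : ∀ x y z : A, cir (mul x y) z = cir (mul x z) y)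
    (hcompat : ∀ x y z : A, (2 : R) • mul z (cir x y) = cir (mul z x) y + cir x (mul z y))
    (hD : ∀ x y : A, D (mul x y) = mul (D x) y + mul x (D y)) (x y z : A) :
    (2 : R) • mul z (bracket cir D x y)
      = bracket cir D (mul z x) y + bracket cir D x (mul z y) := by
  simp only [bracket, hD, map_sub, map_add, LinearMap.add_apply, smul_sub]
  rw [hcompat (D x) y z, hcompat (D y) x z, hmc (D z) x y]
  abel

end DerivedBracket

theorem stmt1_general {k A : Type*} [Field k] [AddCommGroup A] [Module k A]
    (mul cir : A →ₗ[k] A →ₗ[k] A)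
    (hnov1 : ∀ x y z : A, cir (cir x y) z = cir (cir x z) y)
    (hnov2 : ∀ x y z : A, cir (cir x y) z - cir x (cir y z) = cir (cir y x) z - cir y (cir x z))
    (htnp1 : ∀ x y z : A, cir (mul x y) z = cir (mul x z) y)
    (htnp2 : ∀ x y z : A, (2:k) • mul z (cir x y) = cir (mul z x) y + cir x (mul z y))
    (D : A →ₗ[k] A)
    (hDmul : ∀ x y : A, D (mul x y) = mul (D x) y + mul x (D y))
    (hDcir : ∀ x y : A, D (cir x y) = cir (D x) y + cir x (D y))
    (br : A → A → A)
    (hbr : ∀ x y : A, br x y = cir (D x) y - cir (D y) x) :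
    (∀ x y : A, br x y = - br y x) ∧
    (∀ x y z : A, br (br x y) z + br (br y z) x + br (br z x) y = 0) ∧
    (∀ x y z : A, (2:k) • mul z (br x y) = br (mul z x) y + br x (mul z y)) := by
  obtain rfl : br = DerivedBracket.bracket cir D := funext₂ hbr
  exact ⟨DerivedBracket.bracket_antisymm, DerivedBracket.bracket_jacobi hnov1 hnov2 hDcir,
    DerivedBracket.two_smul_mul_bracket mul htnp1 htnp2 hDmul⟩

/-- If D is a derivation of both products of a transposed
Novikov-Poisson algebra, then [x,y] = D(x)∘y − D(y)∘x is a Lie bracket making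
(A,·,[·,·]) a transposed Poisson algebra. -/
theorem stmt1 {k A : Type*} [Field k] [AddCommGroup A] [Module k A]
    (hchar : (2:k) ≠ 0)
    (mul cir : A →ₗ[k] A →ₗ[k] A)
    (hcomm : ∀ x y : A, mul x y = mul y x)
    (hassoc : ∀ x y z : A, mul (mul x y) z = mul x (mul y z))
    (hnov1 : ∀ x y z : A, cir (cir x y) z = cir (cir x z) y)
    (hnov2 : ∀ x y z : A, cir (cir x y) z - cir x (cir y z) = cir (cir y x) z - cir y (cir x z))
    (htnp1 : ∀ x y z : A, cir (mul x y) z = cir (mul x z) y)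
    (htnp2 : ∀ x y z : A, (2:k) • mul z (cir x y) = cir (mul z x) y + cir x (mul z y))
    (D : A →ₗ[k] A)
    (hDmul : ∀ x y : A, D (mul x y) = mul (D x) y + mul x (D y))
    (hDcir : ∀ x y : A, D (cir x y) = cir (D x) y + cir x (D y))
    (br : A → A → A)
    (hbr : ∀ x y : A, br x y = cir (D x) y - cir (D y) x) :
    (∀ x y : A, br x y = - br y x) ∧
    (∀ x y z : A, br (br x y) z + br (br y z) x + br (br z x) y = 0) ∧
    (∀ x y z : A, (2:k) • mul z (br x y) = br (mul z x) y + br x (mul z y)) :=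
  stmt1_general mul cir hnov1 hnov2 htnp1 htnp2 D hDmul hDcir br hbr
end

section
/- Let k have characteristic 0 and A be a k-vector space with two binary operations · and ∘. On A⊗k[t,t⁻¹] define (x tᵐ)·(y tⁿ) = (x·y)t^{m+n} and [x tᵐ, y tⁿ] = m(x∘y)t^{m+n−1} − n(y∘x)t^{m+n−1}. Then (A[t,t⁻¹], ·, [·,·]) is a transposed Poisson algebra if and only if (A,·,∘) is a transposed Novikov-Poisson algebra. -/
set_option linter.unusedSectionVars false
set_option maxHeartbeats 1000000

section Aux
variable {k A : Type*} [Field k] [CharZero k] [AddCommGroup A] [Module k A]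
variable (mul cir : A →ₗ[k] A →ₗ[k] A)

noncomputable def MT (f g : ℤ →₀ A) : ℤ →₀ A :=
  f.sum fun m x => g.sum fun n y => Finsupp.single (m + n) (mul x y)

noncomputable def BT (f g : ℤ →₀ A) : ℤ →₀ A :=
  f.sum fun m x => g.sum fun n y => Finsupp.single (m + n - 1) (m • cir x y - n • cir y x)

lemma MT_single (m n : ℤ) (x y : A) :
    MT mul (Finsupp.single m x) (Finsupp.single n y) = Finsupp.single (m+n) (mul x y) := by
  unfold MT
  rw [Finsupp.sum_single_index, Finsupp.sum_single_index] <;> simp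

lemma BT_single (a b : ℤ) (x y : A) :
    BT cir (Finsupp.single a x) (Finsupp.single b y)
      = Finsupp.single (a+b-1) (a • cir x y - b • cir y x) := by
  unfold BT
  rw [Finsupp.sum_single_index, Finsupp.sum_single_index] <;> simp

lemma MT_zero_left (g : ℤ →₀ A) : MT mul 0 g = 0 := by simp [MT]
lemma MT_zero_right (f : ℤ →₀ A) : MT mul f 0 = 0 := by simp [MT]
lemma BT_zero_left (g : ℤ →₀ A) : BT cir 0 g = 0 := by simp [BT]
lemma BT_zero_right (f : ℤ →₀ A) : BT cir f 0 = 0 := by simp [BT]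

lemma MT_add_left (f f' g : ℤ →₀ A) : MT mul (f + f') g = MT mul f g + MT mul f' g := by
  unfold MT
  rw [Finsupp.sum_add_index'] <;> intros <;>
    simp [Finsupp.sum_add, Finsupp.single_add, ← Finsupp.sum_add]

lemma MT_add_right (f g g' : ℤ →₀ A) : MT mul f (g + g') = MT mul f g + MT mul f g' := by
  unfold MT
  rw [← Finsupp.sum_add]
  congr 1; ext m x
  rw [Finsupp.sum_add_index'] <;> intros <;> simp [Finsupp.single_add]

lemma BT_add_left (f f' g : ℤ →₀ A) : BT cir (f + f') g = BT cir f g + BT cir f' g := by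
  unfold BT
  rw [Finsupp.sum_add_index']
  · intro a; simp
  · intro a b₁ b₂
    rw [← Finsupp.sum_add]
    congr 1; ext n y
    rw [← Finsupp.single_add]
    congr 1
    simp only [map_add, LinearMap.add_apply, smul_add]
    abel

lemma BT_add_right (f g g' : ℤ →₀ A) : BT cir f (g + g') = BT cir f g + BT cir f g' := by
  unfold BT
  rw [← Finsupp.sum_add]
  congr 1; ext m x
  rw [Finsupp.sum_add_index']
  · intro a; simp
  · intro a b₁ b₂
    rw [← Finsupp.single_add]
    congr 1
    simp only [map_add, LinearMap.add_apply, smul_add]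
    abel

lemma zsmul_two_cancel (k : Type*) [Field k] [CharZero k] [Module k A] {w : A}
    (h : (2:ℤ) • w = 0) : w = 0 := by
  have hk : (2:k) • w = 0 := by
    rw [show (2:k) = ((2:ℤ):k) by norm_num, Int.cast_smul_eq_zsmul]; exact h
  have := congrArg (fun u => (2:k)⁻¹ • u) hk
  simpa [smul_smul, inv_mul_cancel₀ (two_ne_zero (α := k))] using this

end Aux

/-- The affinization A[t,t⁻¹] (modelled as ℤ →₀ A, with x tᵐ the
single-supported function) is a transposed Poisson algebra iff (A,·,∘) is a
transposed Novikov-Poisson algebra. -/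
theorem stmt2 {k A : Type*} [Field k] [CharZero k] [AddCommGroup A] [Module k A]
    (mul cir : A →ₗ[k] A →ₗ[k] A)
    (mulT brT : (ℤ →₀ A) → (ℤ →₀ A) → (ℤ →₀ A))
    (hmulT : ∀ f g : ℤ →₀ A,
      mulT f g = f.sum fun m x => g.sum fun n y => Finsupp.single (m + n) (mul x y))
    (hbrT : ∀ f g : ℤ →₀ A,
      brT f g = f.sum fun m x => g.sum fun n y =>
        Finsupp.single (m + n - 1) (m • cir x y - n • cir y x)) :
    ((∀ F G : ℤ →₀ A, mulT F G = mulT G F) ∧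
     (∀ F G H : ℤ →₀ A, mulT (mulT F G) H = mulT F (mulT G H)) ∧
     (∀ F G : ℤ →₀ A, brT F G = - brT G F) ∧
     (∀ F G H : ℤ →₀ A, brT (brT F G) H + brT (brT G H) F + brT (brT H F) G = 0) ∧
     (∀ F G H : ℤ →₀ A, (2:k) • mulT H (brT F G) = brT (mulT H F) G + brT F (mulT H G)))
    ↔
    ((∀ x y : A, mul x y = mul y x) ∧
     (∀ x y z : A, mul (mul x y) z = mul x (mul y z)) ∧
     (∀ x y z : A, cir (cir x y) z = cir (cir x z) y) ∧
     (∀ x y z : A, cir (cir x y) z - cir x (cir y z) = cir (cir y x) z - cir y (cir x z)) ∧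
     (∀ x y z : A, cir (mul x y) z = cir (mul x z) y) ∧
     (∀ x y z : A, (2:k) • mul z (cir x y) = cir (mul z x) y + cir x (mul z y))) := by
  have hM : mulT = MT mul := funext fun f => funext fun g => hmulT f g
  have hB : brT = BT cir := funext fun f => funext fun g => hbrT f g
  subst hM hB
  constructor
  · rintro ⟨hc, ha, -, hj, hl⟩
    have c1 : ∀ x y : A, mul x y = mul y x := by
      intro x y
      have h := hc (Finsupp.single 0 x) (Finsupp.single 0 y)
      rw [MT_single, MT_single] at h
      simpa using DFunLike.congr_fun h (0:ℤ)
    have c2 : ∀ x y z : A, mul (mul x y) z = mul x (mul y z) := by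
      intro x y z
      have h := ha (Finsupp.single 0 x) (Finsupp.single 0 y) (Finsupp.single 0 z)
      simp only [MT_single] at h
      simpa using DFunLike.congr_fun h (0:ℤ)
    have c4 : ∀ x y z : A, cir (cir x y) z - cir x (cir y z)
        = cir (cir y x) z - cir y (cir x z) := by
      intro x y z
      have h := hj (Finsupp.single 1 x) (Finsupp.single 1 y) (Finsupp.single 0 z)
      simp only [BT_single] at h
      have h0 := DFunLike.congr_fun h (0:ℤ)
      simp only [Finsupp.add_apply, Finsupp.single_apply, Finsupp.coe_zero, Pi.zero_apply,
        map_sub, map_zsmul, LinearMap.sub_apply, LinearMap.smul_apply] at h0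
      norm_num at h0
      linear_combination (norm := module) h0
    have c3 : ∀ x y z : A, cir (cir x y) z = cir (cir x z) y := by
      intro x y z
      have h := hj (Finsupp.single 2 x) (Finsupp.single 1 y) (Finsupp.single 0 z)
      simp only [BT_single] at h
      have h0 := DFunLike.congr_fun h (1:ℤ)
      simp only [Finsupp.add_apply, Finsupp.single_apply, Finsupp.coe_zero, Pi.zero_apply,
        map_sub, map_zsmul, LinearMap.sub_apply, LinearMap.smul_apply] at h0
      norm_num at h0
      have key : (2:ℤ) • (cir (cir x y) z - cir (cir x z) y) = 0 := by
        linear_combination (norm := module) h0 - (2:ℤ) • (c4 x y z)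
      exact sub_eq_zero.mp (zsmul_two_cancel k key)
    have c5 : ∀ x y z : A, cir (mul x y) z = cir (mul x z) y := by
      intro x y z
      have h := hl (Finsupp.single 0 y) (Finsupp.single 0 z) (Finsupp.single 1 x)
      simp only [MT_single, BT_single] at h
      have h0 := DFunLike.congr_fun h (0:ℤ)
      simp only [Finsupp.smul_apply, Finsupp.add_apply, Finsupp.single_apply,
        Finsupp.coe_zero, Pi.zero_apply] at h0
      norm_num at h0
      linear_combination (norm := module) -h0
    have c6 : ∀ x y z : A, (2:k) • mul z (cir x y) = cir (mul z x) y + cir x (mul z y) := by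
      intro x y z
      have h := hl (Finsupp.single 1 x) (Finsupp.single 0 y) (Finsupp.single 0 z)
      simp only [MT_single, BT_single] at h
      have h0 := DFunLike.congr_fun h (0:ℤ)
      simp only [Finsupp.smul_apply, Finsupp.add_apply, Finsupp.single_apply] at h0
      norm_num at h0
      linear_combination (norm := module) h0
    exact ⟨c1, c2, c3, c4, c5, c6⟩
  · rintro ⟨c1, c2, c3, c4, c5, c6⟩
    have c6' : ∀ x y z : A, (2:ℤ) • mul z (cir x y) = cir (mul z x) y + cir x (mul z y) := by
      intro x y z
      rw [← Int.cast_smul_eq_zsmul k, show ((2:ℤ):k) = (2:k) by norm_num]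
      exact c6 x y z
    refine ⟨?_, ?_, ?_, ?_, ?_⟩
    · intro F G
      induction F using Finsupp.induction_linear with
      | zero => simp [MT_zero_left, MT_zero_right]
      | add f f' hf hf' => simp [MT_add_left, MT_add_right, hf, hf']
      | single m x =>
        induction G using Finsupp.induction_linear with
        | zero => simp [MT_zero_left, MT_zero_right]
        | add g g' hg hg' => simp [MT_add_left, MT_add_right, hg, hg']
        | single n y => rw [MT_single, MT_single, c1 x y, add_comm]
    · intro F G H
      induction F using Finsupp.induction_linear with
      | zero => simp [MT_zero_left, MT_zero_right]
      | add f f' hf hf' => simp [MT_add_left, MT_add_right, hf, hf']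
      | single m x =>
        induction G using Finsupp.induction_linear with
        | zero => simp [MT_zero_left, MT_zero_right]
        | add g g' hg hg' => simp [MT_add_left, MT_add_right, hg, hg']
        | single n y =>
          induction H using Finsupp.induction_linear with
          | zero => simp [MT_zero_left, MT_zero_right]
          | add h h' hh hh' => simp [MT_add_left, MT_add_right, hh, hh']
          | single p z =>
            simp only [MT_single]
            rw [c2 x y z, add_assoc]
    · intro F G
      induction F using Finsupp.induction_linear with
      | zero => simp [BT_zero_left, BT_zero_right]
      | add f f' hf hf' =>
        simp only [BT_add_left, BT_add_right, hf, hf']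
        abel
      | single m x =>
        induction G using Finsupp.induction_linear with
        | zero => simp [BT_zero_left, BT_zero_right]
        | add g g' hg hg' =>
          simp only [BT_add_left, BT_add_right, hg, hg']
          abel
        | single n y =>
          rw [BT_single, BT_single, show n+m-1 = m+n-1 by ring, ← Finsupp.single_neg,
            neg_sub]
    · intro F G H
      induction F using Finsupp.induction_linear with
      | zero => simp [BT_zero_left, BT_zero_right]
      | add f f' hf hf' =>
        simp only [BT_add_left, BT_add_right]
        linear_combination (norm := module) hf + hf'
      | single a x =>
        induction G using Finsupp.induction_linear with
        | zero => simp [BT_zero_left, BT_zero_right]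
        | add g g' hg hg' =>
          simp only [BT_add_left, BT_add_right]
          linear_combination (norm := module) hg + hg'
        | single b y =>
          induction H using Finsupp.induction_linear with
          | zero => simp [BT_zero_left, BT_zero_right]
          | add h h' hh hh' =>
            simp only [BT_add_left, BT_add_right]
            linear_combination (norm := module) hh + hh'
          | single c z =>
            simp only [BT_single]
            rw [show a+b-1+c-1 = a+b+c-2 by ring, show b+c-1+a-1 = a+b+c-2 by ring,
              show c+a-1+b-1 = a+b+c-2 by ring, ← Finsupp.single_add, ← Finsupp.single_add,
              Finsupp.single_eq_zero]
            simp only [map_sub, map_zsmul, LinearMap.sub_apply, LinearMap.smul_apply]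
            linear_combination (norm := module) (a*b) • c4 x y z + (b*c) • c4 y z x
              + (c*a) • c4 z x y + (a*(a-1)) • c3 x y z + (b*(b-1)) • c3 y z x
              + (c*(c-1)) • c3 z x y
    · intro F G H
      induction F using Finsupp.induction_linear with
      | zero => simp [BT_zero_left, BT_zero_right, MT_zero_left, MT_zero_right]
      | add f f' hf hf' =>
        simp only [BT_add_left, BT_add_right, MT_add_left, MT_add_right, smul_add]
        linear_combination (norm := module) hf + hf'
      | single a x =>
        induction G using Finsupp.induction_linear with
        | zero => simp [BT_zero_left, BT_zero_right, MT_zero_left, MT_zero_right]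
        | add g g' hg hg' =>
          simp only [BT_add_left, BT_add_right, MT_add_left, MT_add_right, smul_add]
          linear_combination (norm := module) hg + hg'
        | single b y =>
          induction H using Finsupp.induction_linear with
          | zero => simp [BT_zero_left, BT_zero_right, MT_zero_left, MT_zero_right]
          | add h h' hh hh' =>
            simp only [BT_add_left, BT_add_right, MT_add_left, MT_add_right, smul_add]
            linear_combination (norm := module) hh + hh'
          | single c z =>
            simp only [MT_single, BT_single]
            rw [Finsupp.smul_single, show c+(a+b-1) = a+b+c-1 by ring,
              show c+a+b-1 = a+b+c-1 by ring, show a+(c+b)-1 = a+b+c-1 by ring,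
              ← Finsupp.single_add]
            refine congrArg _ ?_
            rw [show (2:k) = ((2:ℤ):k) by norm_num, Int.cast_smul_eq_zsmul]
            simp only [map_sub, map_zsmul, LinearMap.sub_apply, LinearMap.smul_apply]
            linear_combination (norm := module) a • c6' x y z - b • c6' y x z - c • c5 z x y
end

section
/- Let (A,·) be a commutative associative algebra and φ : A → A a linear map in the centroid of (A,·), i.e., φ(x·y) = φ(x)·y = x·φ(y) for all x,y. Define x∘y := x·φ(y). Then (A,·,∘) is a transposed Novikov-Poisson algebra. -/
/-!
With `x ∘ y := x · φ y`, every identity reduces to commutativity and associativity of `·`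
together with the centroid rule `φ (x · y) = x · φ y`; in particular `∘` is itself associative,
so both sides of the left-symmetry identity vanish.
-/

section Centroid

variable {k A : Type*} [CommSemiring k] [AddCommMonoid A] [Module k A]
  (mul : A →ₗ[k] A →ₗ[k] A) (φ : A →ₗ[k] A)

theorem mul_mul_right_comm_of_comm_assoc (hcomm : ∀ x y : A, mul x y = mul y x)
    (hassoc : ∀ x y z : A, mul (mul x y) z = mul x (mul y z)) (x y z : A) :
    mul (mul x y) z = mul (mul x z) y := by
  rw [hassoc, hassoc, hcomm y]

theorem centroid_map_mul_left (hcomm : ∀ x y : A, mul x y = mul y x)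
    (hφ : ∀ x y : A, φ (mul x y) = mul x (φ y)) (x y : A) :
    φ (mul x y) = mul (φ x) y := by
  rw [hcomm, hφ, hcomm]

theorem centroid_mul_map_comm (hcomm : ∀ x y : A, mul x y = mul y x)
    (hφ : ∀ x y : A, φ (mul x y) = mul x (φ y)) (x y : A) :
    mul x (φ y) = mul y (φ x) := by
  rw [← hφ, hcomm, hφ]

theorem centroid_mul_map_assoc (hcomm : ∀ x y : A, mul x y = mul y x)
    (hassoc : ∀ x y z : A, mul (mul x y) z = mul x (mul y z))
    (hφ : ∀ x y : A, φ (mul x y) = mul x (φ y)) (x y z : A) :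
    mul (mul x (φ y)) (φ z) = mul x (φ (mul y (φ z))) := by
  rw [hassoc, centroid_map_mul_left mul φ hcomm hφ]

theorem centroid_mul_mul_map_right_comm (hcomm : ∀ x y : A, mul x y = mul y x)
    (hassoc : ∀ x y z : A, mul (mul x y) z = mul x (mul y z))
    (hφ : ∀ x y : A, φ (mul x y) = mul x (φ y)) (x y z : A) :
    mul (mul x y) (φ z) = mul (mul x z) (φ y) := by
  rw [hassoc, hassoc, centroid_mul_map_comm mul φ hcomm hφ]

theorem centroid_mul_map_mul_left (hcomm : ∀ x y : A, mul x y = mul y x)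
    (hassoc : ∀ x y z : A, mul (mul x y) z = mul x (mul y z))
    (hφ : ∀ x y : A, φ (mul x y) = mul x (φ y)) (x y z : A) :
    mul x (φ (mul z y)) = mul z (mul x (φ y)) := by
  rw [hφ, ← hassoc, hcomm x z, hassoc]

end Centroid

theorem stmt5_general {k A : Type*} [Field k] [AddCommGroup A] [Module k A]
    (mul : A →ₗ[k] A →ₗ[k] A)
    (hcomm : ∀ x y : A, mul x y = mul y x)
    (hassoc : ∀ x y z : A, mul (mul x y) z = mul x (mul y z))
    (φ : A →ₗ[k] A)
    (hφ₂ : ∀ x y : A, φ (mul x y) = mul x (φ y))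
    (cir : A → A → A)
    (hcir : ∀ x y : A, cir x y = mul x (φ y)) :
    (∀ x y z : A, cir (cir x y) z = cir (cir x z) y) ∧
    (∀ x y z : A, cir (cir x y) z - cir x (cir y z) = cir (cir y x) z - cir y (cir x z)) ∧
    (∀ x y z : A, cir (mul x y) z = cir (mul x z) y) ∧
    (∀ x y z : A, (2:k) • mul z (cir x y) = cir (mul z x) y + cir x (mul z y)) := by
  simp only [hcir]
  refine ⟨fun x y z => ?_, fun x y z => ?_, fun x y z => ?_, fun x y z => ?_⟩
  · exact mul_mul_right_comm_of_comm_assoc mul hcomm hassoc x _ _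
  · simp only [centroid_mul_map_assoc mul φ hcomm hassoc hφ₂, sub_self]
  · exact centroid_mul_mul_map_right_comm mul φ hcomm hassoc hφ₂ x y z
  · rw [two_smul, hassoc, centroid_mul_map_mul_left mul φ hcomm hassoc hφ₂]

/-- If φ is in the centroid of a commutative associative algebra
(A,·), then x∘y := x·φ(y) makes (A,·,∘) a transposed Novikov-Poisson algebra. -/
theorem stmt5 {k A : Type*} [Field k] [AddCommGroup A] [Module k A]
    (hchar : (2:k) ≠ 0)
    (mul : A →ₗ[k] A →ₗ[k] A)
    (hcomm : ∀ x y : A, mul x y = mul y x)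
    (hassoc : ∀ x y z : A, mul (mul x y) z = mul x (mul y z))
    (φ : A →ₗ[k] A)
    (hφ₁ : ∀ x y : A, φ (mul x y) = mul (φ x) y)
    (hφ₂ : ∀ x y : A, φ (mul x y) = mul x (φ y))
    (cir : A → A → A)
    (hcir : ∀ x y : A, cir x y = mul x (φ y)) :
    (∀ x y z : A, cir (cir x y) z = cir (cir x z) y) ∧
    (∀ x y z : A, cir (cir x y) z - cir x (cir y z) = cir (cir y x) z - cir y (cir x z)) ∧
    (∀ x y z : A, cir (mul x y) z = cir (mul x z) y) ∧
    (∀ x y z : A, (2:k) • mul z (cir x y) = cir (mul z x) y + cir x (mul z y)) :=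
  stmt5_general mul hcomm hassoc φ hφ₂ cir hcir
end

section
/- Let (A,·,∘) be a transposed Novikov-Poisson algebra. Then the following are equivalent: (a) (A,·,∘) is a Novikov-Poisson algebra; (b) (x·y)∘z = z∘(x·y) for all x,y,z ∈ A; (c) for every x ∈ A, left ·-multiplication by x lies in the centroid of (A,∘); (d) for every x ∈ A, left ∘-multiplication by x lies in the centroid of (A,·). -/
/-!
Write `2 x·(y∘z) = (x·y)∘z + y∘(x·z)` for the second transposed identity. Whenever one of the two
terms on the right equals the left-hand side, so does the other; hence the centroid condition (c)
reduces to a single equation. Condition (b) together with `(x·y)∘z = (x·z)∘y` makes the two terms on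
the right equal, and (c) follows on dividing by 2. Conversely (c) gives
`(x·y)∘z = (x·z)∘y = x·(z∘y) = z∘(x·y)`, which is (b); (c) and (d) are the same equations read
through commutativity of `·`, and together they give both Novikov-Poisson identities.
-/

namespace TransposedNovikovPoisson

variable {k A : Type*} {mul cir : A → A → A}

def MemCentroid (op : A → A → A) (φ : A → A) : Prop :=
  ∀ a b, φ (op a b) = op (φ a) b ∧ φ (op a b) = op a (φ b)

def NovikovPoissonCompatible [AddCommGroup A] (mul cir : A → A → A) : Prop :=
  (∀ x y z, cir (mul x y) z = mul x (cir y z)) ∧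
    ∀ x y z, mul (cir x y) z - mul (cir y x) z = cir x (mul y z) - cir y (mul x z)

def ProductsCirCommute (mul cir : A → A → A) : Prop :=
  ∀ x y z, cir (mul x y) z = cir z (mul x y)

section

variable [Field k] [AddCommGroup A] [Module k A]

theorem mul_cir_eq_cir_mul_left_iff
    (htnp2 : ∀ x y z, (2 : k) • mul z (cir x y) = cir (mul z x) y + cir x (mul z y))
    (x y z : A) :
    mul x (cir y z) = cir (mul x y) z ↔ mul x (cir y z) = cir y (mul x z) := by
  have h := htnp2 y z x
  rw [two_smul] at h
  constructor
  · intro hq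
    rw [hq] at h ⊢
    exact add_left_cancel h
  · intro hr
    rw [hr] at h ⊢
    exact add_right_cancel h

theorem memCentroid_of_cir_mul_eq
    (htnp2 : ∀ x y z, (2 : k) • mul z (cir x y) = cir (mul z x) y + cir x (mul z y))
    (h : ∀ x y z, cir (mul x y) z = mul x (cir y z)) (x : A) :
    MemCentroid cir (mul x) := fun y z =>
  ⟨(h x y z).symm, (mul_cir_eq_cir_mul_left_iff htnp2 x y z).1 (h x y z).symm⟩

theorem memCentroid_of_memCentroid_cir
    (htnp2 : ∀ x y z, (2 : k) • mul z (cir x y) = cir (mul z x) y + cir x (mul z y))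
    (hd : ∀ x, MemCentroid mul (cir x)) (x : A) :
    MemCentroid cir (mul x) := fun y z =>
  have hr : mul x (cir y z) = cir y (mul x z) := (hd y x z).2.symm
  ⟨(mul_cir_eq_cir_mul_left_iff htnp2 x y z).2 hr, hr⟩

theorem memCentroid_of_productsCirCommute
    (htnp2 : ∀ x y z, (2 : k) • mul z (cir x y) = cir (mul z x) y + cir x (mul z y))
    (hchar : (2 : k) ≠ 0)
    (htnp1 : ∀ x y z, cir (mul x y) z = cir (mul x z) y) (hb : ProductsCirCommute mul cir)
    (x : A) : MemCentroid cir (mul x) := fun y z =>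
  have hqr : cir y (mul x z) = cir (mul x y) z := by rw [← hb x z y, htnp1]
  have hq : mul x (cir y z) = cir (mul x y) z :=
    smul_right_injective A hchar <| by
      change (2 : k) • _ = (2 : k) • _
      rw [htnp2, hqr, two_smul]
  ⟨hq, (mul_cir_eq_cir_mul_left_iff htnp2 x y z).1 hq⟩

end

theorem productsCirCommute_of_memCentroid (htnp1 : ∀ x y z, cir (mul x y) z = cir (mul x z) y)
    (hc : ∀ x, MemCentroid cir (mul x)) : ProductsCirCommute mul cir := fun x y z => by
  rw [← (hc x z y).2, (hc x z y).1, htnp1]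

theorem memCentroid_cir_of_memCentroid_mul (hcomm : ∀ x y, mul x y = mul y x)
    (hc : ∀ x, MemCentroid cir (mul x)) (x : A) :
    MemCentroid mul (cir x) := fun y z =>
  ⟨by rw [hcomm (cir x y) z, (hc z x y).2, hcomm y z], (hc y x z).2.symm⟩

theorem novikovPoissonCompatible_of_memCentroid [AddCommGroup A]
    (hcomm : ∀ x y, mul x y = mul y x) (hc : ∀ x, MemCentroid cir (mul x)) :
    NovikovPoissonCompatible mul cir := by
  have hd := memCentroid_cir_of_memCentroid_mul hcomm hc
  refine ⟨fun x y z => (hc x y z).1.symm, fun x y z => ?_⟩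
  rw [(hd x y z).1, (hd y x z).1]

end TransposedNovikovPoisson

theorem stmt6_general {k A : Type*} [Field k] [AddCommGroup A] [Module k A]
    (hchar : (2:k) ≠ 0)
    (mul cir : A →ₗ[k] A →ₗ[k] A)
    (hcomm : ∀ x y : A, mul x y = mul y x)
    (htnp1 : ∀ x y z : A, cir (mul x y) z = cir (mul x z) y)
    (htnp2 : ∀ x y z : A, (2:k) • mul z (cir x y) = cir (mul z x) y + cir x (mul z y)) :
    (((∀ x y z : A, cir (mul x y) z = mul x (cir y z)) ∧
      (∀ x y z : A, mul (cir x y) z - mul (cir y x) z = cir x (mul y z) - cir y (mul x z)))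
     ↔ (∀ x y z : A, cir (mul x y) z = cir z (mul x y))) ∧
    ((∀ x y z : A, cir (mul x y) z = cir z (mul x y))
     ↔ (∀ x y z : A, mul x (cir y z) = cir (mul x y) z ∧ mul x (cir y z) = cir y (mul x z))) ∧
    ((∀ x y z : A, mul x (cir y z) = cir (mul x y) z ∧ mul x (cir y z) = cir y (mul x z))
     ↔ (∀ x y z : A, cir x (mul y z) = mul (cir x y) z ∧ cir x (mul y z) = mul y (cir x z))) := by
  open TransposedNovikovPoisson in
  have c_of_b := memCentroid_of_productsCirCommute (mul := (mul · ·)) (cir := (cir · ·))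
    htnp2 hchar htnp1
  have b_of_c := productsCirCommute_of_memCentroid (mul := (mul · ·)) (cir := (cir · ·)) htnp1
  have c_of_d := memCentroid_of_memCentroid_cir (mul := (mul · ·)) (cir := (cir · ·)) htnp2
  have d_of_c := memCentroid_cir_of_memCentroid_mul (mul := (mul · ·)) (cir := (cir · ·)) hcomm
  have c_of_a := memCentroid_of_cir_mul_eq (mul := (mul · ·)) (cir := (cir · ·)) htnp2
  have a_of_c := novikovPoissonCompatible_of_memCentroid (mul := (mul · ·)) (cir := (cir · ·)) hcomm
  exact ⟨⟨fun ha => b_of_c (c_of_a ha.1), fun hb => a_of_c (c_of_b hb)⟩, ⟨c_of_b, b_of_c⟩,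
    ⟨d_of_c, c_of_d⟩⟩

/-- For a transposed Novikov-Poisson algebra, the four conditions
(a) Novikov-Poisson, (b) (x·y)∘z = z∘(x·y), (c) L·(x) ∈ centroid of (A,∘),
(d) L∘(x) ∈ centroid of (A,·) are equivalent. -/
theorem stmt6 {k A : Type*} [Field k] [AddCommGroup A] [Module k A]
    (hchar : (2:k) ≠ 0)
    (mul cir : A →ₗ[k] A →ₗ[k] A)
    (hcomm : ∀ x y : A, mul x y = mul y x)
    (hassoc : ∀ x y z : A, mul (mul x y) z = mul x (mul y z))
    (hnov1 : ∀ x y z : A, cir (cir x y) z = cir (cir x z) y)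
    (hnov2 : ∀ x y z : A, cir (cir x y) z - cir x (cir y z) = cir (cir y x) z - cir y (cir x z))
    (htnp1 : ∀ x y z : A, cir (mul x y) z = cir (mul x z) y)
    (htnp2 : ∀ x y z : A, (2:k) • mul z (cir x y) = cir (mul z x) y + cir x (mul z y)) :
    (((∀ x y z : A, cir (mul x y) z = mul x (cir y z)) ∧
      (∀ x y z : A, mul (cir x y) z - mul (cir y x) z = cir x (mul y z) - cir y (mul x z)))
     ↔ (∀ x y z : A, cir (mul x y) z = cir z (mul x y))) ∧
    ((∀ x y z : A, cir (mul x y) z = cir z (mul x y))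
     ↔ (∀ x y z : A, mul x (cir y z) = cir (mul x y) z ∧ mul x (cir y z) = cir y (mul x z))) ∧
    ((∀ x y z : A, mul x (cir y z) = cir (mul x y) z ∧ mul x (cir y z) = cir y (mul x z))
     ↔ (∀ x y z : A, cir x (mul y z) = mul (cir x y) z ∧ cir x (mul y z) = mul y (cir x z))) :=
  stmt6_general hchar mul cir hcomm htnp1 htnp2
end

section
/- Let (A,·,∘) be a transposed Novikov-Poisson algebra such that (A,·) has a multiplicative unit e. Then the Novikov product ∘ is commutative, and consequently (A,·,∘) is a Novikov-Poisson algebra. -/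
/-!
Feeding the unit into `(x·y)∘z = (x·z)∘y` gives `y∘z = z∘y` at once. With `∘` commutative, the
two summands on the right of `2z·(x∘y) = (z·x)∘y + x∘(z·y)` coincide by the same identity, so
halving gives `(z·x)∘y = z·(x∘y)`; the remaining Novikov-Poisson identity has both sides zero.
-/

theorem comm_of_right_comm_of_left_unit {A : Type*} (mul cir : A → A → A)
    (hright : ∀ x y z : A, cir (mul x y) z = cir (mul x z) y)
    (e : A) (he : ∀ x : A, mul e x = x) (y z : A) :
    cir y z = cir z y := by
  simpa only [he] using hright e y z

theorem cir_mul_left_comm {A : Type*} (mul cir : A → A → A)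
    (hcomm : ∀ x y : A, mul x y = mul y x)
    (hcir_comm : ∀ x y : A, cir x y = cir y x)
    (hright : ∀ x y z : A, cir (mul x y) z = cir (mul x z) y) (x y z : A) :
    cir x (mul y z) = cir y (mul x z) := by
  rw [hcir_comm x, hcir_comm y, hright y z x, hright x z y, hcomm y x]

theorem cir_mul_eq_mul_cir {k A : Type*} [Field k] [AddCommGroup A] [Module k A]
    (hchar : (2:k) ≠ 0) (mul cir : A →ₗ[k] A →ₗ[k] A)
    (hcir_comm : ∀ x y : A, cir x y = cir y x)
    (hright : ∀ x y z : A, cir (mul x y) z = cir (mul x z) y)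
    (hleibniz : ∀ x y z : A, (2:k) • mul z (cir x y) = cir (mul z x) y + cir x (mul z y))
    (x y z : A) :
    cir (mul x y) z = mul x (cir y z) := by
  have h : (2:k) • mul x (cir y z) = (2:k) • cir (mul x y) z := by
    rw [hleibniz y z x, hcir_comm y, hright x z y, two_smul]
  exact (smul_right_injective A hchar h).symm

theorem stmt7_general {k A : Type*} [Field k] [AddCommGroup A] [Module k A]
    (hchar : (2:k) ≠ 0)
    (mul cir : A →ₗ[k] A →ₗ[k] A)
    (hcomm : ∀ x y : A, mul x y = mul y x)
    (htnp1 : ∀ x y z : A, cir (mul x y) z = cir (mul x z) y)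
    (htnp2 : ∀ x y z : A, (2:k) • mul z (cir x y) = cir (mul z x) y + cir x (mul z y))
    (e : A) (he : ∀ x : A, mul e x = x) :
    (∀ x y : A, cir x y = cir y x) ∧
    (∀ x y z : A, cir (mul x y) z = mul x (cir y z)) ∧
    (∀ x y z : A, mul (cir x y) z - mul (cir y x) z = cir x (mul y z) - cir y (mul x z)) := by
  have hcir_comm := comm_of_right_comm_of_left_unit (mul · ·) (cir · ·) htnp1 e he
  refine ⟨hcir_comm, cir_mul_eq_mul_cir hchar mul cir hcir_comm htnp1 htnp2, fun x y z => ?_⟩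
  rw [hcir_comm x y, sub_self,
    cir_mul_left_comm (mul · ·) (cir · ·) hcomm hcir_comm htnp1, sub_self]

/-- If a transposed Novikov-Poisson algebra has a unit for ·, then
∘ is commutative and (A,·,∘) is a Novikov-Poisson algebra. -/
theorem stmt7 {k A : Type*} [Field k] [AddCommGroup A] [Module k A]
    (hchar : (2:k) ≠ 0)
    (mul cir : A →ₗ[k] A →ₗ[k] A)
    (hcomm : ∀ x y : A, mul x y = mul y x)
    (hassoc : ∀ x y z : A, mul (mul x y) z = mul x (mul y z))
    (hnov1 : ∀ x y z : A, cir (cir x y) z = cir (cir x z) y)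
    (hnov2 : ∀ x y z : A, cir (cir x y) z - cir x (cir y z) = cir (cir y x) z - cir y (cir x z))
    (htnp1 : ∀ x y z : A, cir (mul x y) z = cir (mul x z) y)
    (htnp2 : ∀ x y z : A, (2:k) • mul z (cir x y) = cir (mul z x) y + cir x (mul z y))
    (e : A) (he : ∀ x : A, mul e x = x) :
    (∀ x y : A, cir x y = cir y x) ∧
    (∀ x y z : A, cir (mul x y) z = mul x (cir y z)) ∧
    (∀ x y z : A, mul (cir x y) z - mul (cir y x) z = cir x (mul y z) - cir y (mul x z)) :=
  stmt7_general hchar mul cir hcomm htnp1 htnp2 e he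
end

section
/- In any transposed Novikov-Poisson algebra (A,·,∘), the identity (x∘y)·z = (x∘z)·y holds for all x,y,z ∈ A. -/
section TransposedNovikovPoisson

variable {k A : Type*} {mul cir : A → A → A}

theorem two_smul_mul_cir_eq [Semiring k] [AddCommMonoid A] [Module k A]
    (htnp1 : ∀ x y z : A, cir (mul x y) z = cir (mul x z) y)
    (htnp2 : ∀ x y z : A, (2:k) • mul z (cir x y) = cir (mul z x) y + cir x (mul z y))
    (x y z : A) :
    (2:k) • mul z (cir x y) = cir (mul z y) x + cir x (mul z y) := by
  rw [htnp2, htnp1]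

theorem mul_cir_comm [Field k] [AddCommGroup A] [Module k A] (hchar : (2:k) ≠ 0)
    (hcomm : ∀ x y : A, mul x y = mul y x)
    (htnp1 : ∀ x y z : A, cir (mul x y) z = cir (mul x z) y)
    (htnp2 : ∀ x y z : A, (2:k) • mul z (cir x y) = cir (mul z x) y + cir x (mul z y))
    (x y z : A) :
    mul z (cir x y) = mul y (cir x z) :=
  smul_right_injective A hchar <| show (2:k) • _ = (2:k) • _ by
    rw [two_smul_mul_cir_eq htnp1 htnp2, two_smul_mul_cir_eq htnp1 htnp2, hcomm z y]

end TransposedNovikovPoisson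

theorem stmt8_general {k A : Type*} [Field k] [AddCommGroup A] [Module k A]
    (hchar : (2:k) ≠ 0)
    (mul cir : A →ₗ[k] A →ₗ[k] A)
    (hcomm : ∀ x y : A, mul x y = mul y x)
    (htnp1 : ∀ x y z : A, cir (mul x y) z = cir (mul x z) y)
    (htnp2 : ∀ x y z : A, (2:k) • mul z (cir x y) = cir (mul z x) y + cir x (mul z y)) :
    ∀ x y z : A, mul (cir x y) z = mul (cir x z) y := by
  intro x y z
  rw [hcomm (cir x y), hcomm (cir x z)]
  exact mul_cir_comm hchar hcomm htnp1 htnp2 x y z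

/-- In a transposed Novikov-Poisson algebra, (x∘y)·z = (x∘z)·y. -/
theorem stmt8 {k A : Type*} [Field k] [AddCommGroup A] [Module k A]
    (hchar : (2:k) ≠ 0)
    (mul cir : A →ₗ[k] A →ₗ[k] A)
    (hcomm : ∀ x y : A, mul x y = mul y x)
    (hassoc : ∀ x y z : A, mul (mul x y) z = mul x (mul y z))
    (hnov1 : ∀ x y z : A, cir (cir x y) z = cir (cir x z) y)
    (hnov2 : ∀ x y z : A, cir (cir x y) z - cir x (cir y z) = cir (cir y x) z - cir y (cir x z))
    (htnp1 : ∀ x y z : A, cir (mul x y) z = cir (mul x z) y)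
    (htnp2 : ∀ x y z : A, (2:k) • mul z (cir x y) = cir (mul z x) y + cir x (mul z y)) :
    ∀ x y z : A, mul (cir x y) z = mul (cir x z) y :=
  stmt8_general hchar mul cir hcomm htnp1 htnp2
end

section
/- In any transposed Novikov-Poisson algebra (A,·,∘) over a field whose characteristic is neither 2 nor 3, the identity (x∘y)∘(h·z) = (y∘x)∘(h·z) holds for all x,y,z,h ∈ A. -/
/-!
Write `G = (x∘y)∘(h·z) - (y∘x)∘(h·z)` and `S = (h·y)∘(x∘z) - (h·x)∘(y∘z)`.
Moving `h` out of `x∘(h·z)` with the compatibility `2 h·(x∘z) = (h·x)∘z + x∘(h·z)` and using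
right-commutativity of `∘` gives `(x∘y)∘(h·z) = 2 (h·y)∘(x∘z) - ((h·x)∘y)∘z`, so `G = 2 S`.
Expanding `S` instead through the left-symmetric identity gives `S = -G`. Hence `3 G = 0`.
-/

section TransposedNovikovPoisson

variable {k A : Type*} [Field k] [AddCommGroup A] [Module k A] (mul cir : A →ₗ[k] A →ₗ[k] A)

theorem cir_cir_mul_eq_two_smul_sub
    (hnov1 : ∀ x y z : A, cir (cir x y) z = cir (cir x z) y)
    (htnp1 : ∀ x y z : A, cir (mul x y) z = cir (mul x z) y)
    (htnp2 : ∀ x y z : A, (2:k) • mul z (cir x y) = cir (mul z x) y + cir x (mul z y))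
    (x y z h : A) :
    cir (cir x y) (mul h z) = (2:k) • cir (mul h y) (cir x z) - cir (cir (mul h x) y) z := by
  have hxz : cir x (mul h z) = (2:k) • mul h (cir x z) - cir (mul h x) z :=
    eq_sub_of_add_eq' (htnp2 x z h).symm
  calc cir (cir x y) (mul h z) = cir (cir x (mul h z)) y := hnov1 _ _ _
    _ = (2:k) • cir (mul h (cir x z)) y - cir (cir (mul h x) z) y := by
      rw [hxz, map_sub, map_smul, LinearMap.sub_apply, LinearMap.smul_apply]
    _ = _ := by rw [htnp1, hnov1]

theorem cir_cir_sub_cir_cir_mul_eq_two_smul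
    (hnov1 : ∀ x y z : A, cir (cir x y) z = cir (cir x z) y)
    (htnp1 : ∀ x y z : A, cir (mul x y) z = cir (mul x z) y)
    (htnp2 : ∀ x y z : A, (2:k) • mul z (cir x y) = cir (mul z x) y + cir x (mul z y))
    (x y z h : A) :
    cir (cir x y) (mul h z) - cir (cir y x) (mul h z)
      = (2:k) • (cir (mul h y) (cir x z) - cir (mul h x) (cir y z)) := by
  rw [cir_cir_mul_eq_two_smul_sub mul cir hnov1 htnp1 htnp2 x y,
    cir_cir_mul_eq_two_smul_sub mul cir hnov1 htnp1 htnp2 y x, htnp1 h y x]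
  module

theorem cir_mul_cir_sub_eq_neg
    (hnov2 : ∀ x y z : A, cir (cir x y) z - cir x (cir y z) = cir (cir y x) z - cir y (cir x z))
    (htnp2 : ∀ x y z : A, (2:k) • mul z (cir x y) = cir (mul z x) y + cir x (mul z y))
    (x y z h : A) :
    cir (mul h y) (cir x z) - cir (mul h x) (cir y z)
      = -(cir (cir x y) (mul h z) - cir (cir y x) (mul h z)) := by
  -- Expanding `2 • S` with `htnp2` and the Novikov identity (also under `h · _`) gives `S - G`.
  linear_combination (norm := skip)
    (-2:k) • htnp2 y (cir x z) h + (2:k) • htnp2 x (cir y z) h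
      - congrArg (cir y) (htnp2 x z h) + congrArg (cir x) (htnp2 y z h)
      - hnov2 x y (mul h z) + (4:k) • congrArg (mul h) (hnov2 x y z)
      + hnov2 y (mul h x) z - hnov2 x (mul h y) z
      + congrArg (cir.flip z) (htnp2 y x h) - congrArg (cir.flip z) (htnp2 x y h)
      - (2:k) • htnp2 (cir x y) z h + (2:k) • htnp2 (cir y x) z h
  simp only [map_add, map_sub, map_smul, LinearMap.flip_apply]
  module

end TransposedNovikovPoisson

theorem stmt9_general {k A : Type*} [Field k] [AddCommGroup A] [Module k A]
    (hchar3 : (3:k) ≠ 0)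
    (mul cir : A →ₗ[k] A →ₗ[k] A)
    (hnov1 : ∀ x y z : A, cir (cir x y) z = cir (cir x z) y)
    (hnov2 : ∀ x y z : A, cir (cir x y) z - cir x (cir y z) = cir (cir y x) z - cir y (cir x z))
    (htnp1 : ∀ x y z : A, cir (mul x y) z = cir (mul x z) y)
    (htnp2 : ∀ x y z : A, (2:k) • mul z (cir x y) = cir (mul z x) y + cir x (mul z y)) :
    ∀ x y z h : A, cir (cir x y) (mul h z) = cir (cir y x) (mul h z) := by
  intro x y z h
  have h3 : (3:k) • (cir (cir x y) (mul h z) - cir (cir y x) (mul h z)) = 0 := by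
    linear_combination (norm := module)
      cir_cir_sub_cir_cir_mul_eq_two_smul mul cir hnov1 htnp1 htnp2 x y z h
        + (2:k) • cir_mul_cir_sub_eq_neg mul cir hnov2 htnp2 x y z h
  exact sub_eq_zero.mp ((smul_eq_zero.mp h3).resolve_left hchar3)

/-- In a transposed Novikov-Poisson algebra over a field of
characteristic neither 2 nor 3, (x∘y)∘(h·z) = (y∘x)∘(h·z). -/
theorem stmt9 {k A : Type*} [Field k] [AddCommGroup A] [Module k A]
    (hchar2 : (2:k) ≠ 0) (hchar3 : (3:k) ≠ 0)
    (mul cir : A →ₗ[k] A →ₗ[k] A)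
    (hcomm : ∀ x y : A, mul x y = mul y x)
    (hassoc : ∀ x y z : A, mul (mul x y) z = mul x (mul y z))
    (hnov1 : ∀ x y z : A, cir (cir x y) z = cir (cir x z) y)
    (hnov2 : ∀ x y z : A, cir (cir x y) z - cir x (cir y z) = cir (cir y x) z - cir y (cir x z))
    (htnp1 : ∀ x y z : A, cir (mul x y) z = cir (mul x z) y)
    (htnp2 : ∀ x y z : A, (2:k) • mul z (cir x y) = cir (mul z x) y + cir x (mul z y)) :
    ∀ x y z h : A, cir (cir x y) (mul h z) = cir (cir y x) (mul h z) :=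
  stmt9_general hchar3 mul cir hnov1 hnov2 htnp1 htnp2
end

section
/- Let (A₁,·₁,∘₁) and (A₂,·₂,∘₂) be transposed Novikov-Poisson algebras. On A₁ ⊗ A₂ define (a₁⊗a₂)·(b₁⊗b₂) = (a₁·₁b₁)⊗(a₂·₂b₂) and (a₁⊗a₂)∘(b₁⊗b₂) = (a₁·₁b₁)⊗(a₂∘₂b₂) + (a₁∘₁b₁)⊗(a₂·₂b₂). Then (A₁⊗A₂,·,∘) is a transposed Novikov-Poisson algebra. -/
/-!
On pure tensors every axiom of `A₁ ⊗ A₂` reduces to identities in the factors. Besides the axioms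
one needs that every composite `μ (ν x y) z` with `μ, ν ∈ {·, ∘}` is symmetric in `y, z`; for
`(x ∘ y) · z` this follows from the second compatibility axiom after cancelling the factor 2. The
right-commutativity axioms of the tensor product then hold term by term, and the remaining two
follow once every `x ∘ (y · z)` has been eliminated by the second compatibility axiom.
-/

open TensorProduct

structure IsTransposedNovikovPoisson {k A : Type*} [CommRing k] [AddCommGroup A] [Module k A]
    (mul cir : A →ₗ[k] A →ₗ[k] A) : Prop where
  mul_comm : ∀ x y, mul x y = mul y x
  mul_assoc : ∀ x y z, mul (mul x y) z = mul x (mul y z)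
  cir_right_comm : ∀ x y z, cir (cir x y) z = cir (cir x z) y
  cir_assoc_symm : ∀ x y z, cir (cir x y) z - cir x (cir y z) = cir (cir y x) z - cir y (cir x z)
  cir_mul_right_comm : ∀ x y z, cir (mul x y) z = cir (mul x z) y
  two_smul_mul_cir : ∀ x y z, (2 : k) • mul z (cir x y) = cir (mul z x) y + cir x (mul z y)

theorem TensorProduct.ext₃ {R M N P : Type*} [CommSemiring R] [AddCommMonoid M] [Module R M]
    [AddCommMonoid N] [Module R N] [AddCommMonoid P] [Module R P]
    {f g : M ⊗[R] N →ₗ[R] M ⊗[R] N →ₗ[R] M ⊗[R] N →ₗ[R] P}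
    (h : ∀ (a b c : M) (p q r : N),
      f (a ⊗ₜ p) (b ⊗ₜ q) (c ⊗ₜ r) = g (a ⊗ₜ p) (b ⊗ₜ q) (c ⊗ₜ r)) :
    f = g :=
  ext' fun a p => ext' fun b q => ext' fun c r => h a b c p q r

namespace IsTransposedNovikovPoisson

section Identities

variable {k A : Type*} [CommRing k] [AddCommGroup A] [Module k A] {mul cir : A →ₗ[k] A →ₗ[k] A}

theorem mul_right_comm (h : IsTransposedNovikovPoisson mul cir) (x y z : A) :
    mul (mul x y) z = mul (mul x z) y := by
  rw [h.mul_assoc, h.mul_comm y, ← h.mul_assoc]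

theorem mul_cir_right_comm (h : IsTransposedNovikovPoisson mul cir) (h2 : IsSMulRegular A (2 : k))
    (x y z : A) : mul (cir x y) z = mul (cir x z) y := by
  -- both sides, doubled, equal `(x · y) ∘ z + x ∘ (y · z)`
  apply h2
  dsimp only
  rw [h.mul_comm (cir x y), h.mul_comm (cir x z), h.two_smul_mul_cir, h.two_smul_mul_cir,
    h.mul_comm z x, h.cir_mul_right_comm, h.mul_comm x y, h.mul_comm z y]

theorem mul_left_comm (h : IsTransposedNovikovPoisson mul cir) (x y z : A) :
    mul x (mul y z) = mul y (mul x z) := by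
  rw [← h.mul_assoc, h.mul_comm x y, h.mul_assoc]

theorem mul_cir_comm (h : IsTransposedNovikovPoisson mul cir) (h2 : IsSMulRegular A (2 : k))
    (x y z : A) : mul (cir x y) z = mul y (cir x z) := by
  rw [h.mul_cir_right_comm h2, h.mul_comm]

theorem cir_mul_eq_two_smul_sub (h : IsTransposedNovikovPoisson mul cir) (x y z : A) :
    cir x (mul z y) = (2 : k) • mul z (cir x y) - cir (mul z x) y := by
  rw [h.two_smul_mul_cir, add_sub_cancel_left]

theorem cir_cir_eq_sub_add (h : IsTransposedNovikovPoisson mul cir) (x y z : A) :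
    cir (cir x y) z = cir (cir y x) z - cir y (cir x z) + cir x (cir y z) := by
  rw [← h.cir_assoc_symm, sub_add_cancel]

end Identities

section TensorProduct

variable {k A₁ A₂ : Type*} [CommRing k] [AddCommGroup A₁] [Module k A₁] [AddCommGroup A₂]
  [Module k A₂] {mul₁ cir₁ : A₁ →ₗ[k] A₁ →ₗ[k] A₁} {mul₂ cir₂ : A₂ →ₗ[k] A₂ →ₗ[k] A₂}
  {mulT cirT : A₁ ⊗[k] A₂ →ₗ[k] A₁ ⊗[k] A₂ →ₗ[k] A₁ ⊗[k] A₂}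

theorem tmul_cir_assoc_symm (h₁ : IsTransposedNovikovPoisson mul₁ cir₁)
    (h₂ : IsTransposedNovikovPoisson mul₂ cir₂) (h2₁ : IsSMulRegular A₁ (2 : k))
    (h2₂ : IsSMulRegular A₂ (2 : k))
    (hcirT : ∀ (a b : A₁) (p q : A₂),
      cirT (a ⊗ₜ p) (b ⊗ₜ q) = mul₁ a b ⊗ₜ cir₂ p q + cir₁ a b ⊗ₜ mul₂ p q)
    (a b c : A₁) (p q r : A₂) :
    cirT (cirT (a ⊗ₜ p) (b ⊗ₜ q)) (c ⊗ₜ r) + cirT (b ⊗ₜ q) (cirT (a ⊗ₜ p) (c ⊗ₜ r)) =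
      cirT (cirT (b ⊗ₜ q) (a ⊗ₜ p)) (c ⊗ₜ r) + cirT (a ⊗ₜ p) (cirT (b ⊗ₜ q) (c ⊗ₜ r)) := by
  simp only [hcirT, map_add, LinearMap.add_apply]
  rw [h₁.cir_mul_eq_two_smul_sub a c b, h₁.cir_mul_eq_two_smul_sub b c a,
    h₂.cir_mul_eq_two_smul_sub p r q, h₂.cir_mul_eq_two_smul_sub q r p, h₁.mul_comm b a,
    h₂.mul_comm q p, h₁.cir_cir_eq_sub_add a b c, h₂.cir_cir_eq_sub_add p q r]
  simp only [h₁.mul_cir_comm h2₁, h₂.mul_cir_comm h2₂, h₁.mul_assoc, h₂.mul_assoc]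
  rw [h₁.mul_left_comm b a c, h₂.mul_left_comm q p r]
  simp only [sub_tmul, tmul_sub, add_tmul, tmul_add, ← smul_tmul', tmul_smul]
  module

theorem tmul_two_smul_mul_cir (h₁ : IsTransposedNovikovPoisson mul₁ cir₁)
    (h₂ : IsTransposedNovikovPoisson mul₂ cir₂)
    (hmulT : ∀ (a b : A₁) (p q : A₂), mulT (a ⊗ₜ p) (b ⊗ₜ q) = mul₁ a b ⊗ₜ mul₂ p q)
    (hcirT : ∀ (a b : A₁) (p q : A₂),
      cirT (a ⊗ₜ p) (b ⊗ₜ q) = mul₁ a b ⊗ₜ cir₂ p q + cir₁ a b ⊗ₜ mul₂ p q)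
    (a b c : A₁) (p q r : A₂) :
    (2 : k) • mulT (c ⊗ₜ r) (cirT (a ⊗ₜ p) (b ⊗ₜ q)) =
      cirT (mulT (c ⊗ₜ r) (a ⊗ₜ p)) (b ⊗ₜ q) + cirT (a ⊗ₜ p) (mulT (c ⊗ₜ r) (b ⊗ₜ q)) := by
  simp only [hcirT, hmulT, map_add]
  rw [h₁.cir_mul_eq_two_smul_sub a b c, h₂.cir_mul_eq_two_smul_sub p q r, h₁.mul_assoc,
    h₂.mul_assoc, h₁.mul_left_comm a c b, h₂.mul_left_comm p r q]
  simp only [sub_tmul, tmul_sub, ← smul_tmul', tmul_smul]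
  module

theorem tensorProduct (h₁ : IsTransposedNovikovPoisson mul₁ cir₁)
    (h₂ : IsTransposedNovikovPoisson mul₂ cir₂) (h2₁ : IsSMulRegular A₁ (2 : k))
    (h2₂ : IsSMulRegular A₂ (2 : k))
    (hmulT : ∀ (a b : A₁) (p q : A₂), mulT (a ⊗ₜ p) (b ⊗ₜ q) = mul₁ a b ⊗ₜ mul₂ p q)
    (hcirT : ∀ (a b : A₁) (p q : A₂),
      cirT (a ⊗ₜ p) (b ⊗ₜ q) = mul₁ a b ⊗ₜ cir₂ p q + cir₁ a b ⊗ₜ mul₂ p q) :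
    IsTransposedNovikovPoisson mulT cirT where
  -- each axiom is an equality of trilinear maps, where `ν.compr₂ μ` is `μ (ν x y) z` and
  -- `(llcomp ∘ₗ μ).compl₂ ν` is `μ x (ν y z)`, so it suffices to check it on pure tensors
  mul_comm x y := LinearMap.congr_fun₂ (f := mulT) (g := mulT.flip)
    (ext' fun a p => ext' fun b q => by simp [hmulT, h₁.mul_comm a, h₂.mul_comm p]) x y
  mul_assoc x y z := congr($(ext₃ (f := mulT.compr₂ mulT)
    (g := (LinearMap.llcomp k (A₁ ⊗[k] A₂) _ _ ∘ₗ mulT).compl₂ mulT) fun a b c p q r => by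
      simp [hmulT, h₁.mul_assoc, h₂.mul_assoc]) x y z)
  cir_right_comm x y z := congr($(ext₃ (f := cirT.compr₂ cirT)
    (g := LinearMap.lflip.toLinearMap ∘ₗ cirT.compr₂ cirT) fun a b c p q r => by
      simp [hcirT, h₁.mul_right_comm a b c, h₁.cir_right_comm a b c, h₁.cir_mul_right_comm a b c,
        h₁.mul_cir_right_comm h2₁ a b c, h₂.mul_right_comm p q r, h₂.cir_right_comm p q r,
        h₂.cir_mul_right_comm p q r, h₂.mul_cir_right_comm h2₂ p q r]) x y z)
  cir_assoc_symm x y z := sub_eq_sub_iff_add_eq_add.mpr congr($(ext₃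
    (f := cirT.compr₂ cirT + ((LinearMap.llcomp k (A₁ ⊗[k] A₂) _ _ ∘ₗ cirT).compl₂ cirT).flip)
    (g := (cirT.compr₂ cirT).flip + (LinearMap.llcomp k (A₁ ⊗[k] A₂) _ _ ∘ₗ cirT).compl₂ cirT)
    (tmul_cir_assoc_symm h₁ h₂ h2₁ h2₂ hcirT)) x y z)
  cir_mul_right_comm x y z := congr($(ext₃ (f := mulT.compr₂ cirT)
    (g := LinearMap.lflip.toLinearMap ∘ₗ mulT.compr₂ cirT) fun a b c p q r => by
      simp [hmulT, hcirT, h₁.mul_right_comm a b c, h₁.cir_mul_right_comm a b c,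
        h₂.mul_right_comm p q r, h₂.cir_mul_right_comm p q r]) x y z)
  two_smul_mul_cir x y z := congr($(ext₃
    (f := (2 : k) • (LinearMap.llcomp k (A₁ ⊗[k] A₂) _ _ ∘ₗ mulT).compl₂ cirT)
    (g := mulT.compr₂ cirT + ((LinearMap.llcomp k (A₁ ⊗[k] A₂) _ _ ∘ₗ cirT).compl₂ mulT).flip)
    fun a b c p q r => tmul_two_smul_mul_cir h₁ h₂ hmulT hcirT b c a q r p) z x y)

end TensorProduct

end IsTransposedNovikovPoisson

/-- The tensor product of two transposed Novikov-Poisson algebras,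
with (a₁⊗a₂)·(b₁⊗b₂) = (a₁·₁b₁)⊗(a₂·₂b₂) and
(a₁⊗a₂)∘(b₁⊗b₂) = (a₁·₁b₁)⊗(a₂∘₂b₂) + (a₁∘₁b₁)⊗(a₂·₂b₂), is again a
transposed Novikov-Poisson algebra. -/
theorem stmt10 {k A₁ A₂ : Type*} [Field k]
    [AddCommGroup A₁] [Module k A₁] [AddCommGroup A₂] [Module k A₂]
    (hchar : (2:k) ≠ 0)
    (mul₁ cir₁ : A₁ →ₗ[k] A₁ →ₗ[k] A₁) (mul₂ cir₂ : A₂ →ₗ[k] A₂ →ₗ[k] A₂)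
    (hcomm₁ : ∀ x y : A₁, mul₁ x y = mul₁ y x)
    (hassoc₁ : ∀ x y z : A₁, mul₁ (mul₁ x y) z = mul₁ x (mul₁ y z))
    (hnov1₁ : ∀ x y z : A₁, cir₁ (cir₁ x y) z = cir₁ (cir₁ x z) y)
    (hnov2₁ : ∀ x y z : A₁,
      cir₁ (cir₁ x y) z - cir₁ x (cir₁ y z) = cir₁ (cir₁ y x) z - cir₁ y (cir₁ x z))
    (htnp1₁ : ∀ x y z : A₁, cir₁ (mul₁ x y) z = cir₁ (mul₁ x z) y)
    (htnp2₁ : ∀ x y z : A₁,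
      (2:k) • mul₁ z (cir₁ x y) = cir₁ (mul₁ z x) y + cir₁ x (mul₁ z y))
    (hcomm₂ : ∀ x y : A₂, mul₂ x y = mul₂ y x)
    (hassoc₂ : ∀ x y z : A₂, mul₂ (mul₂ x y) z = mul₂ x (mul₂ y z))
    (hnov1₂ : ∀ x y z : A₂, cir₂ (cir₂ x y) z = cir₂ (cir₂ x z) y)
    (hnov2₂ : ∀ x y z : A₂,
      cir₂ (cir₂ x y) z - cir₂ x (cir₂ y z) = cir₂ (cir₂ y x) z - cir₂ y (cir₂ x z))
    (htnp1₂ : ∀ x y z : A₂, cir₂ (mul₂ x y) z = cir₂ (mul₂ x z) y)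
    (htnp2₂ : ∀ x y z : A₂,
      (2:k) • mul₂ z (cir₂ x y) = cir₂ (mul₂ z x) y + cir₂ x (mul₂ z y))
    (mulT cirT : TensorProduct k A₁ A₂ →ₗ[k] TensorProduct k A₁ A₂ →ₗ[k] TensorProduct k A₁ A₂)
    (hmulT : ∀ (a₁ b₁ : A₁) (a₂ b₂ : A₂),
      mulT (a₁ ⊗ₜ[k] a₂) (b₁ ⊗ₜ[k] b₂) = (mul₁ a₁ b₁) ⊗ₜ[k] (mul₂ a₂ b₂))
    (hcirT : ∀ (a₁ b₁ : A₁) (a₂ b₂ : A₂),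
      cirT (a₁ ⊗ₜ[k] a₂) (b₁ ⊗ₜ[k] b₂) =
        (mul₁ a₁ b₁) ⊗ₜ[k] (cir₂ a₂ b₂) + (cir₁ a₁ b₁) ⊗ₜ[k] (mul₂ a₂ b₂)) :
    (∀ x y : TensorProduct k A₁ A₂, mulT x y = mulT y x) ∧
    (∀ x y z : TensorProduct k A₁ A₂, mulT (mulT x y) z = mulT x (mulT y z)) ∧
    (∀ x y z : TensorProduct k A₁ A₂, cirT (cirT x y) z = cirT (cirT x z) y) ∧
    (∀ x y z : TensorProduct k A₁ A₂,
      cirT (cirT x y) z - cirT x (cirT y z) = cirT (cirT y x) z - cirT y (cirT x z)) ∧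
    (∀ x y z : TensorProduct k A₁ A₂, cirT (mulT x y) z = cirT (mulT x z) y) ∧
    (∀ x y z : TensorProduct k A₁ A₂,
      (2:k) • mulT z (cirT x y) = cirT (mulT z x) y + cirT x (mulT z y)) := by
  have h := IsTransposedNovikovPoisson.tensorProduct
    ⟨hcomm₁, hassoc₁, hnov1₁, hnov2₁, htnp1₁, htnp2₁⟩
    ⟨hcomm₂, hassoc₂, hnov1₂, hnov2₂, htnp1₂, htnp2₂⟩
    (.of_ne_zero hchar) (.of_ne_zero hchar) hmulT hcirT
  exact ⟨h.mul_comm, h.mul_assoc, h.cir_right_comm, h.cir_assoc_symm, h.cir_mul_right_comm,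
    h.two_smul_mul_cir⟩
end

section
/- Let (A,·,∘) be a transposed Novikov-Poisson algebra and p, q ∈ A fixed elements. Define x ·_p y := p·x·y and x ∘_q y := x∘y + q·x·y. Then (A, ·_p, ∘_q) is a transposed Novikov-Poisson algebra. -/
/-!
Write `x ·ₚ y = p·x·y` and `x ∘_q y = x∘y + q·x·y`. The identities for `·ₚ` are immediate from
commutativity and associativity of `·`. The transposed Leibniz rule for `∘` forces
`z·(x∘y) = y·(x∘z)` (compare both sides after multiplying by `2`); with it, every identity for
`∘_q` splits into the corresponding identity for `∘` plus terms of the form `q·(…)` that cancel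
after rearranging products, the rule itself being used once more to trade `x∘(q·y·z)` for
`(q·y·x)∘z`.
-/

section TransposedNovikovPoisson

variable {k A : Type*} [CommRing k] [AddCommGroup A] [Module k A] (mul cir : A →ₗ[k] A →ₗ[k] A)

def pMul (p x y : A) : A := mul p (mul x y)

def qCir (q x y : A) : A := cir x y + mul q (mul x y)

variable {mul cir}

theorem mul_left_comm_of_comm_assoc (hcomm : ∀ x y, mul x y = mul y x)
    (hassoc : ∀ x y z, mul (mul x y) z = mul x (mul y z)) (x y z : A) :
    mul x (mul y z) = mul y (mul x z) := by
  rw [← hassoc, hcomm x y, hassoc]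

theorem mul_cir_eq_mul_cir_swap (h2 : IsSMulRegular A (2 : k)) (hcomm : ∀ x y, mul x y = mul y x)
    (htnp1 : ∀ x y z, cir (mul x y) z = cir (mul x z) y)
    (htnp2 : ∀ x y z, (2 : k) • mul z (cir x y) = cir (mul z x) y + cir x (mul z y))
    (x y z : A) : mul z (cir x y) = mul y (cir x z) :=
  h2 <| show (2 : k) • _ = (2 : k) • _ by rw [htnp2, htnp2, htnp1 z x y, htnp1 y x z, hcomm z y]

theorem mul_mul_mul_right_comm (hcomm : ∀ x y, mul x y = mul y x)
    (hassoc : ∀ x y z, mul (mul x y) z = mul x (mul y z)) (a x y z : A) :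
    mul (mul a (mul x y)) z = mul (mul a (mul x z)) y := by
  rw [hassoc, hassoc, hassoc, hassoc, hcomm y z]

theorem cir_mul_mul_right_comm (hassoc : ∀ x y z, mul (mul x y) z = mul x (mul y z))
    (htnp1 : ∀ x y z, cir (mul x y) z = cir (mul x z) y) (a x y z : A) :
    cir (mul a (mul x y)) z = cir (mul a (mul x z)) y := by
  rw [← hassoc, htnp1, hassoc]

theorem pMul_comm (hcomm : ∀ x y, mul x y = mul y x) (p x y : A) :
    pMul mul p x y = pMul mul p y x := by
  rw [pMul, pMul, hcomm x y]

theorem pMul_assoc (hcomm : ∀ x y, mul x y = mul y x)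
    (hassoc : ∀ x y z, mul (mul x y) z = mul x (mul y z)) (p x y z : A) :
    pMul mul p (pMul mul p x y) z = pMul mul p x (pMul mul p y z) := by
  rw [pMul, pMul, pMul, pMul, hassoc p, hassoc x, mul_left_comm_of_comm_assoc hcomm hassoc x p]

theorem qCir_right_comm (hcomm : ∀ x y, mul x y = mul y x)
    (hassoc : ∀ x y z, mul (mul x y) z = mul x (mul y z))
    (hnov1 : ∀ x y z, cir (cir x y) z = cir (cir x z) y)
    (htnp1 : ∀ x y z, cir (mul x y) z = cir (mul x z) y)
    (hmc : ∀ x y z, mul z (cir x y) = mul y (cir x z)) (q x y z : A) :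
    qCir mul cir q (qCir mul cir q x y) z = qCir mul cir q (qCir mul cir q x z) y := by
  have hmul_cir : mul (cir x y) z = mul (cir x z) y := by
    rw [hcomm, hmc, hcomm]
  simp only [qCir, map_add, LinearMap.add_apply]
  rw [hnov1, cir_mul_mul_right_comm hassoc htnp1, hmul_cir,
    mul_mul_mul_right_comm hcomm hassoc]

theorem cir_mul_mul_eq_sub (hassoc : ∀ x y z, mul (mul x y) z = mul x (mul y z))
    (htnp2 : ∀ x y z, (2 : k) • mul z (cir x y) = cir (mul z x) y + cir x (mul z y))
    (q x y z : A) :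
    cir x (mul q (mul y z)) = (2 : k) • mul q (mul y (cir x z)) - cir (mul q (mul y x)) z := by
  rw [eq_sub_iff_add_eq, add_comm, ← hassoc, ← hassoc, ← hassoc, htnp2]

theorem qCir_left_symm (hcomm : ∀ x y, mul x y = mul y x)
    (hassoc : ∀ x y z, mul (mul x y) z = mul x (mul y z))
    (hnov2 : ∀ x y z, cir (cir x y) z - cir x (cir y z) = cir (cir y x) z - cir y (cir x z))
    (htnp2 : ∀ x y z, (2 : k) • mul z (cir x y) = cir (mul z x) y + cir x (mul z y))
    (hmc : ∀ x y z, mul z (cir x y) = mul y (cir x z)) (q x y z : A) :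
    qCir mul cir q (qCir mul cir q x y) z - qCir mul cir q x (qCir mul cir q y z) =
      qCir mul cir q (qCir mul cir q y x) z - qCir mul cir q y (qCir mul cir q x z) := by
  have hlc := mul_left_comm_of_comm_assoc hcomm hassoc
  have hmul_cir : ∀ x y, mul (cir x y) z = mul y (cir x z) := fun x y => by rw [hcomm, hmc]
  have hmul : ∀ x y, mul (mul q (mul x y)) z = mul x (mul q (mul y z)) := fun x y => by
    rw [hassoc, hassoc, hlc q x]
  have hqyx : mul q (mul y x) = mul q (mul x y) := by rw [hcomm y]
  simp only [qCir, map_add, LinearMap.add_apply]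
  rw [cir_mul_mul_eq_sub hassoc htnp2 q x y z, cir_mul_mul_eq_sub hassoc htnp2 q y x z,
    hmul_cir, hmul_cir, hmul, hmul, hqyx]
  linear_combination (norm := module) hnov2 x y z

theorem qCir_pMul_right_comm (hcomm : ∀ x y, mul x y = mul y x)
    (hassoc : ∀ x y z, mul (mul x y) z = mul x (mul y z))
    (htnp1 : ∀ x y z, cir (mul x y) z = cir (mul x z) y) (p q x y z : A) :
    qCir mul cir q (pMul mul p x y) z = qCir mul cir q (pMul mul p x z) y := by
  rw [qCir, qCir, pMul, pMul, cir_mul_mul_right_comm hassoc htnp1,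
    mul_mul_mul_right_comm hcomm hassoc]

theorem pMul_qCir (hcomm : ∀ x y, mul x y = mul y x)
    (hassoc : ∀ x y z, mul (mul x y) z = mul x (mul y z))
    (htnp2 : ∀ x y z, (2 : k) • mul z (cir x y) = cir (mul z x) y + cir x (mul z y))
    (p q x y z : A) :
    (2 : k) • pMul mul p z (qCir mul cir q x y) =
      qCir mul cir q (pMul mul p z x) y + qCir mul cir q x (pMul mul p z y) := by
  have hlc := mul_left_comm_of_comm_assoc hcomm hassoc
  have hleibniz := htnp2 x y (mul p z)
  rw [hassoc, hassoc, hassoc] at hleibniz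
  have h1 : mul q (mul (mul p (mul z x)) y) = mul p (mul z (mul q (mul x y))) := by
    rw [hassoc, hassoc, hlc q, hlc q, hlc q]
  have h2 : mul q (mul x (mul p (mul z y))) = mul p (mul z (mul q (mul x y))) := by
    rw [hlc x p, hlc q p, hlc x z, hlc q z]
  rw [pMul, pMul, pMul, qCir, qCir, qCir, h1, h2, map_add, map_add, smul_add, hleibniz]
  module

end TransposedNovikovPoisson

/-- For fixed p, q in a transposed Novikov-Poisson algebra,
x ·ₚ y := p·x·y and x ∘_q y := x∘y + q·x·y yield a transposed Novikov-Poisson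
algebra. -/
theorem stmt11 {k A : Type*} [Field k] [AddCommGroup A] [Module k A]
    (hchar : (2:k) ≠ 0)
    (mul cir : A →ₗ[k] A →ₗ[k] A)
    (hcomm : ∀ x y : A, mul x y = mul y x)
    (hassoc : ∀ x y z : A, mul (mul x y) z = mul x (mul y z))
    (hnov1 : ∀ x y z : A, cir (cir x y) z = cir (cir x z) y)
    (hnov2 : ∀ x y z : A, cir (cir x y) z - cir x (cir y z) = cir (cir y x) z - cir y (cir x z))
    (htnp1 : ∀ x y z : A, cir (mul x y) z = cir (mul x z) y)
    (htnp2 : ∀ x y z : A, (2:k) • mul z (cir x y) = cir (mul z x) y + cir x (mul z y))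
    (p q : A)
    (mulP cirQ : A → A → A)
    (hmulP : ∀ x y : A, mulP x y = mul p (mul x y))
    (hcirQ : ∀ x y : A, cirQ x y = cir x y + mul q (mul x y)) :
    (∀ x y : A, mulP x y = mulP y x) ∧
    (∀ x y z : A, mulP (mulP x y) z = mulP x (mulP y z)) ∧
    (∀ x y z : A, cirQ (cirQ x y) z = cirQ (cirQ x z) y) ∧
    (∀ x y z : A, cirQ (cirQ x y) z - cirQ x (cirQ y z) = cirQ (cirQ y x) z - cirQ y (cirQ x z)) ∧
    (∀ x y z : A, cirQ (mulP x y) z = cirQ (mulP x z) y) ∧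
    (∀ x y z : A, (2:k) • mulP z (cirQ x y) = cirQ (mulP z x) y + cirQ x (mulP z y)) := by
  obtain rfl : mulP = pMul mul p := funext₂ hmulP
  obtain rfl : cirQ = qCir mul cir q := funext₂ hcirQ
  have hmc := mul_cir_eq_mul_cir_swap (smul_right_injective A hchar) hcomm htnp1 htnp2
  exact ⟨pMul_comm hcomm p, pMul_assoc hcomm hassoc p,
    qCir_right_comm hcomm hassoc hnov1 htnp1 hmc q, qCir_left_symm hcomm hassoc hnov2 htnp2 hmc q,
    qCir_pMul_right_comm hcomm hassoc htnp1 p q, pMul_qCir hcomm hassoc htnp2 p q⟩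
end

section
/- Let (A,·,∘) be a transposed Novikov-Poisson algebra and u ∈ A a fixed element. Define x⋆y := u·(x∘y) − (u·x)∘y − x∘(u·y). Then (A,·,⋆) is again a transposed Novikov-Poisson algebra, and moreover x⋆y = −u·(x∘y). -/
/-!
Specialising `2 z·(x∘y) = (z·x)∘y + x∘(z·y)` to `z = u` shows `x ⋆ y = -u·(x∘y)`. Since the
Novikov identities are quadratic, the sign is irrelevant there, and it suffices that
`x ∘ᵤ y := u·(x∘y)` is again left Novikov. Expanding the two nested products
`(x ∘ᵤ y) ∘ᵤ z` and `x ∘ᵤ (y ∘ᵤ z)` with the same compatibility identity, once at the inner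
and once at the outer level, writes each of them as
`u·(T(u·x, y, z) + T(x, u·y, z) + T(x, y, u·z)) - 2 u·u·T(x, y, z)`
for the corresponding trilinear map `T`; such an expression inherits every symmetry of `T`.
-/

section TransposedNovikovPoisson

variable {k A : Type*} [CommRing k] [AddCommGroup A] [Module k A]
  (mul cir : A →ₗ[k] A →ₗ[k] A) (u : A)

theorem kantor_eq_neg_mul_cir
    (htnp2 : ∀ x y z : A, (2:k) • mul z (cir x y) = cir (mul z x) y + cir x (mul z y))
    (x y : A) :
    mul u (cir x y) - cir (mul u x) y - cir x (mul u y) = -mul u (cir x y) := by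
  linear_combination (norm := module) htnp2 x y u

theorem mul_cir_mul_cir_left
    (htnp2 : ∀ x y z : A, (2:k) • mul z (cir x y) = cir (mul z x) y + cir x (mul z y))
    (x y z : A) :
    mul u (cir (mul u (cir x y)) z) =
      mul u (cir (cir (mul u x) y) z + cir (cir x (mul u y)) z + cir (cir x y) (mul u z))
        - (2:k) • mul u (mul u (cir (cir x y) z)) := by
  linear_combination (norm :=
      (simp only [map_add, map_smul, LinearMap.add_apply, LinearMap.smul_apply]; module))
    congrArg (fun t => mul u (cir t z)) (htnp2 x y u) + congrArg (mul u) (htnp2 (cir x y) z u)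

theorem mul_cir_mul_cir_right
    (htnp2 : ∀ x y z : A, (2:k) • mul z (cir x y) = cir (mul z x) y + cir x (mul z y))
    (x y z : A) :
    mul u (cir x (mul u (cir y z))) =
      mul u (cir (mul u x) (cir y z) + cir x (cir (mul u y) z) + cir x (cir y (mul u z)))
        - (2:k) • mul u (mul u (cir x (cir y z))) := by
  linear_combination (norm := (simp only [map_add, map_smul]; module))
    congrArg (fun t => mul u (cir x t)) (htnp2 y z u) + congrArg (mul u) (htnp2 x (cir y z) u)

theorem mul_cir_mul_cir_right_comm
    (hnov1 : ∀ x y z : A, cir (cir x y) z = cir (cir x z) y)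
    (htnp2 : ∀ x y z : A, (2:k) • mul z (cir x y) = cir (mul z x) y + cir x (mul z y))
    (x y z : A) :
    mul u (cir (mul u (cir x y)) z) = mul u (cir (mul u (cir x z)) y) := by
  rw [mul_cir_mul_cir_left mul cir u htnp2, mul_cir_mul_cir_left mul cir u htnp2, hnov1 x y z,
    hnov1 (mul u x) y z, hnov1 x (mul u y) z, hnov1 x y (mul u z),
    add_right_comm _ (cir (cir x z) _)]

theorem mul_cir_mul_cir_left_symm
    (hnov2 : ∀ x y z : A, cir (cir x y) z - cir x (cir y z) = cir (cir y x) z - cir y (cir x z))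
    (htnp2 : ∀ x y z : A, (2:k) • mul z (cir x y) = cir (mul z x) y + cir x (mul z y))
    (x y z : A) :
    mul u (cir (mul u (cir x y)) z) - mul u (cir x (mul u (cir y z))) =
      mul u (cir (mul u (cir y x)) z) - mul u (cir y (mul u (cir x z))) := by
  simp only [mul_cir_mul_cir_left mul cir u htnp2, mul_cir_mul_cir_right mul cir u htnp2]
  linear_combination (norm := (simp only [map_add, map_sub]; module))
    congrArg (mul u) (hnov2 (mul u x) y z) + congrArg (mul u) (hnov2 x (mul u y) z)
      + congrArg (mul u) (hnov2 x y (mul u z))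
      - (2:k) • congrArg (fun t => mul u (mul u t)) (hnov2 x y z)

end TransposedNovikovPoisson

theorem stmt12_general {k A : Type*} [Field k] [AddCommGroup A] [Module k A]
    (mul cir : A →ₗ[k] A →ₗ[k] A)
    (hcomm : ∀ x y : A, mul x y = mul y x)
    (hassoc : ∀ x y z : A, mul (mul x y) z = mul x (mul y z))
    (hnov1 : ∀ x y z : A, cir (cir x y) z = cir (cir x z) y)
    (hnov2 : ∀ x y z : A, cir (cir x y) z - cir x (cir y z) = cir (cir y x) z - cir y (cir x z))
    (htnp1 : ∀ x y z : A, cir (mul x y) z = cir (mul x z) y)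
    (htnp2 : ∀ x y z : A, (2:k) • mul z (cir x y) = cir (mul z x) y + cir x (mul z y))
    (u : A)
    (star : A → A → A)
    (hstar : ∀ x y : A, star x y = mul u (cir x y) - cir (mul u x) y - cir x (mul u y)) :
    (∀ x y : A, star x y = - mul u (cir x y)) ∧
    (∀ x y z : A, star (star x y) z = star (star x z) y) ∧
    (∀ x y z : A, star (star x y) z - star x (star y z) = star (star y x) z - star y (star x z)) ∧
    (∀ x y z : A, star (mul x y) z = star (mul x z) y) ∧
    (∀ x y z : A, (2:k) • mul z (star x y) = star (mul z x) y + star x (mul z y)) := by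
  have hneg : ∀ x y : A, star x y = -mul u (cir x y) := fun x y =>
    (hstar x y).trans (kantor_eq_neg_mul_cir mul cir u htnp2 x y)
  refine ⟨hneg, fun x y z => ?_, fun x y z => ?_, fun x y z => ?_, fun x y z => ?_⟩
  · simp only [hneg, map_neg, LinearMap.neg_apply, neg_neg]
    exact mul_cir_mul_cir_right_comm mul cir u hnov1 htnp2 x y z
  · simp only [hneg, map_neg, LinearMap.neg_apply, neg_neg]
    exact mul_cir_mul_cir_left_symm mul cir u hnov2 htnp2 x y z
  · rw [hneg, hneg, htnp1]
  · have hmul_left_comm : mul z (mul u (cir x y)) = mul u (mul z (cir x y)) := by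
      rw [← hassoc, hcomm z u, hassoc]
    rw [hneg, hneg, hneg, map_neg, hmul_left_comm, smul_neg, ← map_smul, htnp2, map_add, neg_add]

/-- The left Kantor product x⋆y := u·(x∘y) − (u·x)∘y − x∘(u·y) of a
transposed Novikov-Poisson algebra satisfies x⋆y = −u·(x∘y) and makes (A,·,⋆)
again a transposed Novikov-Poisson algebra. -/
theorem stmt12 {k A : Type*} [Field k] [AddCommGroup A] [Module k A]
    (hchar : (2:k) ≠ 0)
    (mul cir : A →ₗ[k] A →ₗ[k] A)
    (hcomm : ∀ x y : A, mul x y = mul y x)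
    (hassoc : ∀ x y z : A, mul (mul x y) z = mul x (mul y z))
    (hnov1 : ∀ x y z : A, cir (cir x y) z = cir (cir x z) y)
    (hnov2 : ∀ x y z : A, cir (cir x y) z - cir x (cir y z) = cir (cir y x) z - cir y (cir x z))
    (htnp1 : ∀ x y z : A, cir (mul x y) z = cir (mul x z) y)
    (htnp2 : ∀ x y z : A, (2:k) • mul z (cir x y) = cir (mul z x) y + cir x (mul z y))
    (u : A)
    (star : A → A → A)
    (hstar : ∀ x y : A, star x y = mul u (cir x y) - cir (mul u x) y - cir x (mul u y)) :
    (∀ x y : A, star x y = - mul u (cir x y)) ∧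
    (∀ x y z : A, star (star x y) z = star (star x z) y) ∧
    (∀ x y z : A, star (star x y) z - star x (star y z) = star (star y x) z - star y (star x z)) ∧
    (∀ x y z : A, star (mul x y) z = star (mul x z) y) ∧
    (∀ x y z : A, (2:k) • mul z (star x y) = star (mul z x) y + star x (mul z y)) :=
  stmt12_general mul cir hcomm hassoc hnov1 hnov2 htnp1 htnp2 u star hstar
end

section
/- Let (A,∘) be a Novikov algebra of dimension ≥ 2 such that every 1/2-derivation of (A,∘) is a scalar multiple of the identity map. Then for any commutative associative product · making (A,·,∘) a transposed Novikov-Poisson algebra, the product · is identically zero. -/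
/-!
By the second transposed Novikov-Poisson identity every left multiplication `mul z` is a
1/2-derivation of `cir`, hence a scalar `α_z`. Commutativity gives `α_x • w = α_w • x` for all `w`,
so a single nonzero `α_x` would force `A` to be spanned by `x`, contradicting `2 ≤ dim A`.
-/

section

variable {k A : Type*} [Field k] [AddCommGroup A] [Module k A]

theorem rank_le_one_of_forall_smul_eq_smul {x : A} {α : k} (hα : α ≠ 0)
    (h : ∀ w : A, ∃ β : k, α • w = β • x) : Module.rank k A ≤ 1 := by
  refine rank_le_one_iff.mpr ⟨x, fun w => ?_⟩
  obtain ⟨β, hβ⟩ := h w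
  exact ⟨α⁻¹ * β, by rw [mul_smul, ← hβ, inv_smul_smul₀ hα]⟩

theorem eq_zero_of_comm_of_forall_mul_left_eq_smul (mul : A →ₗ[k] A →ₗ[k] A)
    (hdim : 2 ≤ Module.rank k A) (hcomm : ∀ x y : A, mul x y = mul y x)
    (hscalar : ∀ z : A, ∃ α : k, ∀ w : A, mul z w = α • w) (x y : A) : mul x y = 0 := by
  obtain ⟨α, hα⟩ := hscalar x
  rcases eq_or_ne α 0 with rfl | hα0
  · rw [hα y, zero_smul]
  · have hspan : ∀ w : A, ∃ β : k, α • w = β • x := fun w => by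
      obtain ⟨β, hβ⟩ := hscalar w
      exact ⟨β, by rw [← hα w, hcomm, hβ x]⟩
    have := hdim.trans (rank_le_one_of_forall_smul_eq_smul hα0 hspan)
    norm_num at this

end

theorem stmt14_general {k A : Type*} [Field k] [AddCommGroup A] [Module k A]
    (hdim : 2 ≤ Module.rank k A)
    (mul cir : A →ₗ[k] A →ₗ[k] A)
    (hcomm : ∀ x y : A, mul x y = mul y x)
    (htnp2 : ∀ x y z : A, (2:k) • mul z (cir x y) = cir (mul z x) y + cir x (mul z y))
    (htriv : ∀ φ : A →ₗ[k] A,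
      (∀ x y : A, (2:k) • φ (cir x y) = cir (φ x) y + cir x (φ y)) →
      ∃ α : k, ∀ x : A, φ x = α • x) :
    ∀ x y : A, mul x y = 0 :=
  eq_zero_of_comm_of_forall_mul_left_eq_smul mul hdim hcomm
    fun z => htriv (mul z) fun x y => htnp2 x y z

/-- If a Novikov algebra of dimension ≥ 2 admits only trivial
1/2-derivations (scalar multiples of the identity), then every compatible
transposed Novikov-Poisson structure has zero commutative product. -/
theorem stmt14 {k A : Type*} [Field k] [AddCommGroup A] [Module k A]
    (hchar : (2:k) ≠ 0)
    (hdim : 2 ≤ Module.rank k A)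
    (mul cir : A →ₗ[k] A →ₗ[k] A)
    (hcomm : ∀ x y : A, mul x y = mul y x)
    (hassoc : ∀ x y z : A, mul (mul x y) z = mul x (mul y z))
    (hnov1 : ∀ x y z : A, cir (cir x y) z = cir (cir x z) y)
    (hnov2 : ∀ x y z : A, cir (cir x y) z - cir x (cir y z) = cir (cir y x) z - cir y (cir x z))
    (htnp1 : ∀ x y z : A, cir (mul x y) z = cir (mul x z) y)
    (htnp2 : ∀ x y z : A, (2:k) • mul z (cir x y) = cir (mul z x) y + cir x (mul z y))
    (htriv : ∀ φ : A →ₗ[k] A,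
      (∀ x y : A, (2:k) • φ (cir x y) = cir (φ x) y + cir x (φ y)) →
      ∃ α : k, ∀ x : A, φ x = α • x) :
    ∀ x y : A, mul x y = 0 :=
  stmt14_general hdim mul cir hcomm htnp2 htriv
end

section
/- Let (A,∘) be a Novikov algebra and φ a 1/2-derivation of (A,∘). Then for all x,y,z ∈ A: (x∘y)∘φ(z) = (x∘φ(y))∘z, and (x∘y)∘φ(z) − (y∘x)∘φ(z) = φ(x)∘(y∘z) − φ(y)∘(x∘z). -/
/-!
Write `xy` for `mul x y` and `(x, y, z) = (xy)z - x(yz)` for the associator. Applying the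
1/2-derivation rule twice expresses `4 φ((xy)z)` and `4 φ((x, y, z))` through products in which
`φ` hits a single factor. Right commutativity `(xy)z = (xz)y` makes the first expression
symmetric in `y, z`, which forces `(xy)φ(z) = (xφ(y))z`. In the second, the three associators with
one argument replaced by its image are symmetric in their first two arguments by left symmetry,
so antisymmetrising in `x, y` leaves exactly the second identity.
-/

namespace HalfDerivation

variable {R A : Type*} [CommRing R] [AddCommGroup A] [Module R A]
  (mul : A →ₗ[R] A →ₗ[R] A) (φ : A →ₗ[R] A)

def IsHalfDerivation : Prop :=
  ∀ x y : A, (2 : R) • φ (mul x y) = mul (φ x) y + mul x (φ y)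

def associator (x y z : A) : A :=
  mul (mul x y) z - mul x (mul y z)

variable {mul φ}

lemma four_smul_map_mul_mul (hφ : IsHalfDerivation mul φ) (x y z : A) :
    (4 : R) • φ (mul (mul x y) z) =
      mul (mul (φ x) y) z + mul (mul x (φ y)) z + (2 : R) • mul (mul x y) (φ z) := by
  have outer := hφ (mul x y) z
  have inner := congrArg (mul · z) (hφ x y)
  simp only [map_smul, map_add, LinearMap.smul_apply, LinearMap.add_apply] at inner
  linear_combination (norm := module) (2 : R) • outer + inner

lemma four_smul_map_mul_mul' (hφ : IsHalfDerivation mul φ) (x y z : A) :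
    (4 : R) • φ (mul x (mul y z)) =
      (2 : R) • mul (φ x) (mul y z) + mul x (mul (φ y) z) + mul x (mul y (φ z)) := by
  have outer := hφ x (mul y z)
  have inner := congrArg (mul x) (hφ y z)
  simp only [map_smul, map_add] at inner
  linear_combination (norm := module) (2 : R) • outer + inner

lemma four_smul_map_associator (hφ : IsHalfDerivation mul φ) (x y z : A) :
    (4 : R) • φ (associator mul x y z) =
      associator mul (φ x) y z + associator mul x (φ y) z + associator mul x y (φ z) +
        (mul (mul x y) (φ z) - mul (φ x) (mul y z)) := by
  simp only [associator, map_sub, smul_sub, four_smul_map_mul_mul hφ,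
    four_smul_map_mul_mul' hφ]
  module

theorem mul_mul_map_eq_mul_map_mul (hφ : IsHalfDerivation mul φ)
    (hcomm : ∀ x y z : A, mul (mul x y) z = mul (mul x z) y) (x y z : A) :
    mul (mul x y) (φ z) = mul (mul x (φ y)) z := by
  have key := congrArg ((4 : R) • φ ·) (hcomm x y z)
  simp only [four_smul_map_mul_mul hφ] at key
  linear_combination (norm := module)
    key - hcomm (φ x) y z - (2 : R) • hcomm x (φ y) z - hcomm x y (φ z)

theorem mul_mul_map_sub_mul_mul_map (hφ : IsHalfDerivation mul φ)
    (hsymm : ∀ x y z : A, associator mul x y z = associator mul y x z) (x y z : A) :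
    mul (mul x y) (φ z) - mul (mul y x) (φ z) = mul (φ x) (mul y z) - mul (φ y) (mul x z) := by
  have key := congrArg ((4 : R) • φ ·) (hsymm x y z)
  simp only [four_smul_map_associator hφ] at key
  linear_combination (norm := module)
    key - hsymm (φ x) y z - hsymm x (φ y) z - hsymm x y (φ z)

end HalfDerivation

open HalfDerivation in
theorem stmt15_general {k A : Type*} [Field k] [AddCommGroup A] [Module k A]
    (cir : A →ₗ[k] A →ₗ[k] A)
    (hnov1 : ∀ x y z : A, cir (cir x y) z = cir (cir x z) y)
    (hnov2 : ∀ x y z : A, cir (cir x y) z - cir x (cir y z) = cir (cir y x) z - cir y (cir x z))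
    (φ : A →ₗ[k] A)
    (hφ : ∀ x y : A, (2:k) • φ (cir x y) = cir (φ x) y + cir x (φ y)) :
    (∀ x y z : A, cir (cir x y) (φ z) = cir (cir x (φ y)) z) ∧
    (∀ x y z : A, cir (cir x y) (φ z) - cir (cir y x) (φ z)
      = cir (φ x) (cir y z) - cir (φ y) (cir x z)) :=
  ⟨mul_mul_map_eq_mul_map_mul hφ hnov1, mul_mul_map_sub_mul_mul_map hφ hnov2⟩

/-- For a 1/2-derivation φ of a Novikov algebra (A,∘):
(x∘y)∘φ(z) = (x∘φ(y))∘z and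
(x∘y)∘φ(z) − (y∘x)∘φ(z) = φ(x)∘(y∘z) − φ(y)∘(x∘z). -/
theorem stmt15 {k A : Type*} [Field k] [AddCommGroup A] [Module k A]
    (hchar : (2:k) ≠ 0)
    (cir : A →ₗ[k] A →ₗ[k] A)
    (hnov1 : ∀ x y z : A, cir (cir x y) z = cir (cir x z) y)
    (hnov2 : ∀ x y z : A, cir (cir x y) z - cir x (cir y z) = cir (cir y x) z - cir y (cir x z))
    (φ : A →ₗ[k] A)
    (hφ : ∀ x y : A, (2:k) • φ (cir x y) = cir (φ x) y + cir x (φ y)) :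
    (∀ x y z : A, cir (cir x y) (φ z) = cir (cir x (φ y)) z) ∧
    (∀ x y z : A, cir (cir x y) (φ z) - cir (cir y x) (φ z)
      = cir (φ x) (cir y z) - cir (φ y) (cir x z)) :=
  stmt15_general cir hnov1 hnov2 φ hφ
end

section
/- Let (A,·,∘) be a transposed Novikov-Poisson algebra with ∘ not identically zero. Then the span of all products A∘A is an ideal of (A,·); consequently, if A∘A ≠ A then A∘A is a non-trivial ideal of (A,·,∘), so (A,·,∘) is not simple. In particular, every non-trivial simple transposed Novikov-Poisson algebra satisfies A∘A = A. -/
/-!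
The second transposed identity `2 z·(x∘y) = (z·x)∘y + x∘(z·y)` with `2` invertible writes
`z·(x∘y)` as a combination of `∘`-products, so the span of `A∘A` absorbs `·`; it is a
`∘`-ideal for free and nonzero because `∘` is. Simplicity then forces it to be all of `A`.
-/

section TransposedNovikovPoisson

variable {k A : Type*} [Field k] [AddCommGroup A] [Module k A]

theorem mul_mem_span_cir (mul cir : A →ₗ[k] A →ₗ[k] A) (hchar : (2:k) ≠ 0)
    (htnp2 : ∀ x y z : A, (2:k) • mul z (cir x y) = cir (mul z x) y + cir x (mul z y))
    (w : A) {a : A} (ha : a ∈ Submodule.span k {z : A | ∃ x y : A, cir x y = z}) :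
    mul w a ∈ Submodule.span k {z : A | ∃ x y : A, cir x y = z} := by
  set S := Submodule.span k {z : A | ∃ x y : A, cir x y = z}
  have hgen : ∀ x y : A, cir x y ∈ S := fun x y => Submodule.subset_span ⟨x, y, rfl⟩
  suffices S ≤ S.comap (mul w) from this ha
  refine Submodule.span_le.mpr ?_
  rintro _ ⟨x, y, rfl⟩
  have hhalf : mul w (cir x y) = (2:k)⁻¹ • (cir (mul w x) y + cir x (mul w y)) := by
    rw [← htnp2, smul_smul, inv_mul_cancel₀ hchar, one_smul]
  rw [SetLike.mem_coe, Submodule.mem_comap, hhalf]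
  exact S.smul_mem _ (S.add_mem (hgen _ _) (hgen _ _))

theorem span_cir_ne_bot (cir : A →ₗ[k] A →ₗ[k] A) (hcir : ∃ x y : A, cir x y ≠ 0) :
    Submodule.span k {z : A | ∃ x y : A, cir x y = z} ≠ ⊥ := by
  obtain ⟨x, y, hxy⟩ := hcir
  rw [Ne, Submodule.span_eq_bot]
  exact fun h => hxy (h _ ⟨x, y, rfl⟩)

end TransposedNovikovPoisson

theorem stmt18_general {k A : Type*} [Field k] [AddCommGroup A] [Module k A]
    (hchar : (2:k) ≠ 0)
    (mul cir : A →ₗ[k] A →ₗ[k] A)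
    (htnp2 : ∀ x y z : A, (2:k) • mul z (cir x y) = cir (mul z x) y + cir x (mul z y))
    (hcir : ∃ x y : A, cir x y ≠ 0) :
    (∀ a ∈ Submodule.span k {z : A | ∃ x y : A, cir x y = z}, ∀ w : A,
      mul w a ∈ Submodule.span k {z : A | ∃ x y : A, cir x y = z}) ∧
    (Submodule.span k {z : A | ∃ x y : A, cir x y = z} ≠ ⊤ →
      ∃ I : Submodule k A,
        (∀ a ∈ I, ∀ w : A, mul w a ∈ I) ∧
        (∀ a ∈ I, ∀ w : A, cir w a ∈ I ∧ cir a w ∈ I) ∧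
        I ≠ ⊥ ∧ I ≠ ⊤) ∧
    ((∃ x y : A, mul x y ≠ 0) →
      (∀ I : Submodule k A,
        (∀ a ∈ I, ∀ w : A, mul w a ∈ I) →
        (∀ a ∈ I, ∀ w : A, cir w a ∈ I ∧ cir a w ∈ I) →
        I = ⊥ ∨ I = ⊤) →
      Submodule.span k {z : A | ∃ x y : A, cir x y = z} = ⊤) := by
  set S := Submodule.span k {z : A | ∃ x y : A, cir x y = z}
  have hmul : ∀ a ∈ S, ∀ w : A, mul w a ∈ S :=
    fun _ ha w => mul_mem_span_cir mul cir hchar htnp2 w ha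
  have hcirS : ∀ a ∈ S, ∀ w : A, cir w a ∈ S ∧ cir a w ∈ S :=
    fun a _ w => ⟨Submodule.subset_span ⟨w, a, rfl⟩, Submodule.subset_span ⟨a, w, rfl⟩⟩
  have hbot : S ≠ ⊥ := span_cir_ne_bot cir hcir
  exact ⟨hmul, fun hS => ⟨S, hmul, hcirS, hbot, hS⟩,
    fun _ hsimple => (hsimple S hmul hcirS).resolve_left hbot⟩

/-- In a transposed Novikov-Poisson algebra with ∘ ≠ 0, the span
of all ∘-products is an ideal of (A,·); if A∘A ≠ A it is a non-trivial ideal of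
(A,·,∘), so the algebra is not simple; hence every non-trivial simple
transposed Novikov-Poisson algebra satisfies A∘A = A. -/
theorem stmt18 {k A : Type*} [Field k] [AddCommGroup A] [Module k A]
    (hchar : (2:k) ≠ 0)
    (mul cir : A →ₗ[k] A →ₗ[k] A)
    (hcomm : ∀ x y : A, mul x y = mul y x)
    (hassoc : ∀ x y z : A, mul (mul x y) z = mul x (mul y z))
    (hnov1 : ∀ x y z : A, cir (cir x y) z = cir (cir x z) y)
    (hnov2 : ∀ x y z : A, cir (cir x y) z - cir x (cir y z) = cir (cir y x) z - cir y (cir x z))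
    (htnp1 : ∀ x y z : A, cir (mul x y) z = cir (mul x z) y)
    (htnp2 : ∀ x y z : A, (2:k) • mul z (cir x y) = cir (mul z x) y + cir x (mul z y))
    (hcir : ∃ x y : A, cir x y ≠ 0) :
    (∀ a ∈ Submodule.span k {z : A | ∃ x y : A, cir x y = z}, ∀ w : A,
      mul w a ∈ Submodule.span k {z : A | ∃ x y : A, cir x y = z}) ∧
    (Submodule.span k {z : A | ∃ x y : A, cir x y = z} ≠ ⊤ →
      ∃ I : Submodule k A,
        (∀ a ∈ I, ∀ w : A, mul w a ∈ I) ∧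
        (∀ a ∈ I, ∀ w : A, cir w a ∈ I ∧ cir a w ∈ I) ∧
        I ≠ ⊥ ∧ I ≠ ⊤) ∧
    ((∃ x y : A, mul x y ≠ 0) →
      (∀ I : Submodule k A,
        (∀ a ∈ I, ∀ w : A, mul w a ∈ I) →
        (∀ a ∈ I, ∀ w : A, cir w a ∈ I ∧ cir a w ∈ I) →
        I = ⊥ ∨ I = ⊤) →
      Submodule.span k {z : A | ∃ x y : A, cir x y = z} = ⊤) :=
  stmt18_general hchar mul cir htnp2 hcir
end

section
/- Let (A,·,∘) be a transposed Novikov-Poisson algebra with A∘A = A. Then every ideal I of the Novikov algebra (A,∘) satisfies (A·I)∘A ⊆ I and A∘(A·I) ⊆ I, and moreover A·I ⊆ I; hence every ideal of (A,∘) is an ideal of (A,·,∘). Consequently, if (A,·,∘) is a non-trivial simple transposed Novikov-Poisson algebra, then the Novikov algebra (A,∘) is simple. -/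
/-!
Rewriting `2 z·(x∘y) = (z·x)∘y + x∘(z·y)` inside `(x∘y)∘w = (x∘w)∘y` gives, after halving,
an identity expressing `(x∘w)∘(z·a)` through terms of the shapes `(x∘(z·a))∘w`, `(x∘a)∘(z·w)`
and `(x∘(z·w))∘a`, all of which lie in any Novikov ideal `I` containing `a` (the first after
expanding `x∘(z·a)` once more and using `(A·I)∘A ⊆ I`, which holds since `(x·a)∘z = (x·z)∘a`).
Hence `(A∘A)∘(A·I) ⊆ I`, and `A∘A = A` upgrades this to `A∘(A·I) ⊆ I`. With both inclusions,
the identity read as `2 a·(x∘y) = (a·x)∘y + x∘(a·y)` gives `(A∘A)·I ⊆ I`, hence `A·I ⊆ I`.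
-/

theorem Submodule.apply_mem_of_span_eq_top {R M N : Type*} [Semiring R] [AddCommMonoid M]
    [Module R M] [AddCommMonoid N] [Module R N] {s : Set M} (hs : span R s = ⊤)
    (f : M →ₗ[R] N) (p : Submodule R N) (h : ∀ x ∈ s, f x ∈ p) (x : M) : f x ∈ p := by
  have hle : span R s ≤ p.comap f := span_le.mpr h
  rw [hs] at hle
  exact hle Submodule.mem_top

namespace TransposedNovikovPoisson

variable {k A : Type*} [Field k] [AddCommGroup A] [Module k A] {mul cir : A →ₗ[k] A →ₗ[k] A}

theorem cir_mul_cir_add_cir_cir_mul_comm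
    (hnov1 : ∀ x y z : A, cir (cir x y) z = cir (cir x z) y)
    (htnp2 : ∀ x y z : A, (2:k) • mul z (cir x y) = cir (mul z x) y + cir x (mul z y))
    (x y z w : A) :
    cir (mul z (cir x y)) w + cir (cir x y) (mul z w)
      = cir (mul z (cir x w)) y + cir (cir x w) (mul z y) := by
  rw [← htnp2, ← htnp2, hnov1]

theorem cir_cir_mul_add_two_smul_cir_cir_mul_comm
    (hnov1 : ∀ x y z : A, cir (cir x y) z = cir (cir x z) y)
    (htnp2 : ∀ x y z : A, (2:k) • mul z (cir x y) = cir (mul z x) y + cir x (mul z y))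
    (x y z w : A) :
    cir (cir x (mul z y)) w + (2:k) • cir (cir x y) (mul z w)
      = cir (cir x (mul z w)) y + (2:k) • cir (cir x w) (mul z y) := by
  have expand : ∀ y w : A, (2:k) • cir (mul z (cir x y)) w
      = cir (cir (mul z x) y) w + cir (cir x (mul z y)) w := fun y w => by
    rw [← LinearMap.smul_apply, ← map_smul, htnp2, map_add, LinearMap.add_apply]
  have h := congrArg ((2:k) • ·) (cir_mul_cir_add_cir_cir_mul_comm hnov1 htnp2 x y z w)
  simp only [smul_add] at h
  rw [expand, expand, hnov1 (mul z x) y w, add_assoc, add_assoc] at h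
  exact add_left_cancel h

variable {I : Submodule k A}

theorem cir_mul_mem (htnp1 : ∀ x y z : A, cir (mul x y) z = cir (mul x z) y)
    (hL : ∀ a ∈ I, ∀ w : A, cir w a ∈ I) {a : A} (ha : a ∈ I) (x z : A) :
    cir (mul x a) z ∈ I := by
  rw [htnp1]
  exact hL a ha _

theorem cir_cir_mul_mem_of_left (htnp1 : ∀ x y z : A, cir (mul x y) z = cir (mul x z) y)
    (htnp2 : ∀ x y z : A, (2:k) • mul z (cir x y) = cir (mul z x) y + cir x (mul z y))
    (hL : ∀ a ∈ I, ∀ w : A, cir w a ∈ I) (hR : ∀ a ∈ I, ∀ w : A, cir a w ∈ I)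
    {a : A} (ha : a ∈ I) (x z w : A) :
    cir (cir x (mul z a)) w ∈ I := by
  have h := congrArg (cir · w) (htnp2 x a z)
  simp only [map_smul, map_add, LinearMap.smul_apply, LinearMap.add_apply] at h
  have hlhs : (2:k) • cir (mul z (cir x a)) w ∈ I :=
    I.smul_mem _ (cir_mul_mem htnp1 hL (hL a ha x) z w)
  rw [h] at hlhs
  exact (I.add_mem_iff_right (hR _ (hL a ha _) w)).mp hlhs

theorem cir_cir_mul_mem (hchar : (2:k) ≠ 0)
    (hnov1 : ∀ x y z : A, cir (cir x y) z = cir (cir x z) y)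
    (htnp1 : ∀ x y z : A, cir (mul x y) z = cir (mul x z) y)
    (htnp2 : ∀ x y z : A, (2:k) • mul z (cir x y) = cir (mul z x) y + cir x (mul z y))
    (hL : ∀ a ∈ I, ∀ w : A, cir w a ∈ I) (hR : ∀ a ∈ I, ∀ w : A, cir a w ∈ I)
    {a : A} (ha : a ∈ I) (x w z : A) :
    cir (cir x w) (mul z a) ∈ I := by
  rw [← I.smul_mem_iff hchar]
  have hsum : cir (cir x (mul z a)) w + (2:k) • cir (cir x a) (mul z w) ∈ I :=
    add_mem (cir_cir_mul_mem_of_left htnp1 htnp2 hL hR ha x z w)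
      (I.smul_mem _ (hR _ (hL a ha x) _))
  rw [cir_cir_mul_add_two_smul_cir_cir_mul_comm hnov1 htnp2] at hsum
  exact (I.add_mem_iff_right (hL a ha _)).mp hsum

theorem cir_mul_mem_right (hchar : (2:k) ≠ 0)
    (hnov1 : ∀ x y z : A, cir (cir x y) z = cir (cir x z) y)
    (htnp1 : ∀ x y z : A, cir (mul x y) z = cir (mul x z) y)
    (htnp2 : ∀ x y z : A, (2:k) • mul z (cir x y) = cir (mul z x) y + cir x (mul z y))
    (hAA : Submodule.span k {z : A | ∃ x y : A, cir x y = z} = ⊤)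
    (hL : ∀ a ∈ I, ∀ w : A, cir w a ∈ I) (hR : ∀ a ∈ I, ∀ w : A, cir a w ∈ I)
    {a : A} (ha : a ∈ I) (x z : A) :
    cir z (mul x a) ∈ I :=
  Submodule.apply_mem_of_span_eq_top hAA (cir.flip (mul x a)) I
    (by rintro _ ⟨p, q, rfl⟩; exact cir_cir_mul_mem hchar hnov1 htnp1 htnp2 hL hR ha p q x) z

theorem mul_mem (hchar : (2:k) ≠ 0) (hcomm : ∀ x y : A, mul x y = mul y x)
    (hnov1 : ∀ x y z : A, cir (cir x y) z = cir (cir x z) y)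
    (htnp1 : ∀ x y z : A, cir (mul x y) z = cir (mul x z) y)
    (htnp2 : ∀ x y z : A, (2:k) • mul z (cir x y) = cir (mul z x) y + cir x (mul z y))
    (hAA : Submodule.span k {z : A | ∃ x y : A, cir x y = z} = ⊤)
    (hL : ∀ a ∈ I, ∀ w : A, cir w a ∈ I) (hR : ∀ a ∈ I, ∀ w : A, cir a w ∈ I)
    {a : A} (ha : a ∈ I) (x : A) :
    mul x a ∈ I := by
  refine Submodule.apply_mem_of_span_eq_top hAA (mul.flip a) I ?_ x
  rintro _ ⟨p, q, rfl⟩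
  rw [LinearMap.flip_apply, hcomm, ← I.smul_mem_iff hchar, htnp2, hcomm a p, hcomm a q]
  exact add_mem (cir_mul_mem htnp1 hL ha p q)
    (cir_mul_mem_right hchar hnov1 htnp1 htnp2 hAA hL hR ha q p)

end TransposedNovikovPoisson

open TransposedNovikovPoisson in
theorem stmt19_general {k A : Type*} [Field k] [AddCommGroup A] [Module k A]
    (hchar : (2:k) ≠ 0)
    (mul cir : A →ₗ[k] A →ₗ[k] A)
    (hcomm : ∀ x y : A, mul x y = mul y x)
    (hnov1 : ∀ x y z : A, cir (cir x y) z = cir (cir x z) y)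
    (htnp1 : ∀ x y z : A, cir (mul x y) z = cir (mul x z) y)
    (htnp2 : ∀ x y z : A, (2:k) • mul z (cir x y) = cir (mul z x) y + cir x (mul z y))
    (hAA : Submodule.span k {z : A | ∃ x y : A, cir x y = z} = ⊤) :
    (∀ I : Submodule k A,
      (∀ a ∈ I, ∀ w : A, cir w a ∈ I ∧ cir a w ∈ I) →
      ((∀ a ∈ I, ∀ x z : A, cir (mul x a) z ∈ I) ∧
       (∀ a ∈ I, ∀ x z : A, cir z (mul x a) ∈ I) ∧
       (∀ a ∈ I, ∀ x : A, mul x a ∈ I))) ∧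
    ((∃ x y : A, mul x y ≠ 0) → (∃ x y : A, cir x y ≠ 0) →
      (∀ I : Submodule k A,
        (∀ a ∈ I, ∀ w : A, mul w a ∈ I) →
        (∀ a ∈ I, ∀ w : A, cir w a ∈ I ∧ cir a w ∈ I) →
        I = ⊥ ∨ I = ⊤) →
      ((∃ x y : A, cir x y ≠ 0) ∧
       ∀ I : Submodule k A,
         (∀ a ∈ I, ∀ w : A, cir w a ∈ I ∧ cir a w ∈ I) →
         I = ⊥ ∨ I = ⊤)) := by
  have ideal_mul_mem : ∀ I : Submodule k A, (∀ a ∈ I, ∀ w : A, cir w a ∈ I ∧ cir a w ∈ I) →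
      ∀ a ∈ I, ∀ x : A, mul x a ∈ I := fun I hI a ha =>
    mul_mem hchar hcomm hnov1 htnp1 htnp2 hAA (fun b hb w => (hI b hb w).1)
      (fun b hb w => (hI b hb w).2) ha
  refine ⟨fun I hI => ⟨?_, ?_, ideal_mul_mem I hI⟩, ?_⟩
  · exact fun a ha => cir_mul_mem htnp1 (fun b hb w => (hI b hb w).1) ha
  · exact fun a ha => cir_mul_mem_right hchar hnov1 htnp1 htnp2 hAA
      (fun b hb w => (hI b hb w).1) (fun b hb w => (hI b hb w).2) ha
  · intro _ hcir hsimple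
    exact ⟨hcir, fun I hI => hsimple I (ideal_mul_mem I hI) hI⟩

/-- In a transposed Novikov-Poisson algebra with A∘A = A, every
ideal I of (A,∘) satisfies (A·I)∘A ⊆ I, A∘(A·I) ⊆ I and A·I ⊆ I (so it is an
ideal of (A,·,∘)); consequently if (A,·,∘) is non-trivial simple then (A,∘) is
a simple Novikov algebra. -/
theorem stmt19 {k A : Type*} [Field k] [AddCommGroup A] [Module k A]
    (hchar : (2:k) ≠ 0)
    (mul cir : A →ₗ[k] A →ₗ[k] A)
    (hcomm : ∀ x y : A, mul x y = mul y x)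
    (hassoc : ∀ x y z : A, mul (mul x y) z = mul x (mul y z))
    (hnov1 : ∀ x y z : A, cir (cir x y) z = cir (cir x z) y)
    (hnov2 : ∀ x y z : A, cir (cir x y) z - cir x (cir y z) = cir (cir y x) z - cir y (cir x z))
    (htnp1 : ∀ x y z : A, cir (mul x y) z = cir (mul x z) y)
    (htnp2 : ∀ x y z : A, (2:k) • mul z (cir x y) = cir (mul z x) y + cir x (mul z y))
    (hAA : Submodule.span k {z : A | ∃ x y : A, cir x y = z} = ⊤) :
    (∀ I : Submodule k A,
      (∀ a ∈ I, ∀ w : A, cir w a ∈ I ∧ cir a w ∈ I) →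
      ((∀ a ∈ I, ∀ x z : A, cir (mul x a) z ∈ I) ∧
       (∀ a ∈ I, ∀ x z : A, cir z (mul x a) ∈ I) ∧
       (∀ a ∈ I, ∀ x : A, mul x a ∈ I))) ∧
    ((∃ x y : A, mul x y ≠ 0) → (∃ x y : A, cir x y ≠ 0) →
      (∀ I : Submodule k A,
        (∀ a ∈ I, ∀ w : A, mul w a ∈ I) →
        (∀ a ∈ I, ∀ w : A, cir w a ∈ I ∧ cir a w ∈ I) →
        I = ⊥ ∨ I = ⊤) →
      ((∃ x y : A, cir x y ≠ 0) ∧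
       ∀ I : Submodule k A,
         (∀ a ∈ I, ∀ w : A, cir w a ∈ I ∧ cir a w ∈ I) →
         I = ⊥ ∨ I = ⊤)) :=
  stmt19_general hchar mul cir hcomm hnov1 htnp1 htnp2 hAA
end
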